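/- arXiv:math/0503002 — 2 statements merged into one kernel-verified Lean document; each statement's English description precedes it below -/
import Mathlib

section
/- The dual Cauchy identity: ∏_{i=1}^n ∏_{j=1}^n (1 + α_i β_j) = Σ_μ s_{μ'}(α_1,...,α_n)·s_μ(β_1,...,β_n), where the sum is over all partitions μ fitting in an n×n box and μ' denotes the conjugate partition. -/
open scoped Classical

noncomputable section

/-- Cells of the Young diagram of `f : Fin r → ℕ` (viewed as a partition with at most
`r` parts, row `i` having length `f i`). -/
def pcells {r : ℕ} (f : Fin r → ℕ) : Finset (Fin r × ℕ) :=
  (Finset.univ ×ˢ Finset.range (Finset.univ.sup f)).filter (fun p => p.2 < f p.1)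

/-- `T` is a semistandard filling of the diagram of `f` with entries in `Fin n`:
rows weakly increase, columns strictly increase. -/
def IsSSYT {r n : ℕ} (f : Fin r → ℕ) (T : {x // x ∈ pcells f} → Fin n) : Prop :=
  (∀ p q : {x // x ∈ pcells f},
      p.val.1 = q.val.1 → p.val.2 ≤ q.val.2 → T p ≤ T q) ∧
  (∀ p q : {x // x ∈ pcells f},
      p.val.2 = q.val.2 → p.val.1 < q.val.1 → T p < T q)

/-- The Schur polynomial `s_f(x_1, …, x_n)`, defined combinatorially as the sum over
semistandard Young tableaux of shape `f` with entries in `{1, …, n}` of their weights. -/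
def schurPoly {r : ℕ} (f : Fin r → ℕ) (n : ℕ) : MvPolynomial (Fin n) ℤ :=
  ∑ T ∈ Finset.univ.filter (fun T : {x // x ∈ pcells f} → Fin n => IsSSYT f T),
    ∏ c : {x // x ∈ pcells f}, MvPolynomial.X (T c)

/-- The `j`-th part (`j` counted from `0`) of the conjugate of the partition `f`. -/
def conjPart {r : ℕ} (f : Fin r → ℕ) (j : ℕ) : ℕ :=
  (Finset.univ.filter (fun i => j < f i)).card

/-- The finset of partitions with at most `n` parts and size at most `m`. -/
def partitionsLE (n m : ℕ) : Finset (Fin n → ℕ) :=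
  (Fintype.piFinset fun _ => Finset.range (m + 1)).filter
    (fun f => (∀ i j : Fin n, i ≤ j → f j ≤ f i) ∧ ∑ i, f i ≤ m)

open Finset
namespace DC


/-- Partitions as functions `ℕ → ℕ`. -/
def Antit (f : ℕ → ℕ) : Prop := ∀ i j : ℕ, i ≤ j → f j ≤ f i

/-- Functions supported on `[0,N)` with values `≤ N`. -/
def bx (N : ℕ) : Finset (ℕ → ℕ) :=
  (Fintype.piFinset (fun _ : Fin N => Finset.range (N+1))).image
    (fun g k => if h : k < N then g ⟨k, h⟩ else 0)

lemma mem_bx {N : ℕ} {f : ℕ → ℕ} :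
    f ∈ bx N ↔ (∀ k, f k ≤ N) ∧ (∀ k, N ≤ k → f k = 0) := by
  constructor
  · rintro hf
    simp only [bx, Finset.mem_image] at hf
    obtain ⟨g, hg, rfl⟩ := hf
    simp only [Fintype.mem_piFinset, Finset.mem_range] at hg
    constructor
    · intro k
      by_cases h : k < N
      · simp only [dif_pos h]; exact Nat.lt_succ_iff.mp (hg _)
      · simp [dif_neg h]
    · intro k hk; simp [dif_neg (not_lt.mpr hk)]
  · rintro ⟨h1, h2⟩
    simp only [bx, Finset.mem_image]
    refine ⟨fun i => f i, ?_, ?_⟩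
    · simp only [Fintype.mem_piFinset, Finset.mem_range]
      exact fun i => Nat.lt_succ_iff.mpr (h1 i)
    · funext k
      by_cases h : k < N
      · simp [dif_pos h]
      · simp [dif_neg h, h2 k (not_lt.mp h)]

def sz (N : ℕ) (f : ℕ → ℕ) : ℕ := ∑ k ∈ Finset.range N, f k

/-- horizontal strip -/
def HS (r l : ℕ → ℕ) : Prop := (∀ k, r k ≤ l k) ∧ (∀ k, l (k+1) ≤ r k)

/-- vertical strip -/
def VS (r l : ℕ → ℕ) : Prop := (∀ k, r k ≤ l k) ∧ (∀ k, l k ≤ r k + 1)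

/-- positions where the larger partition `lam` may get an extra cell -/
def Ecand (N : ℕ) (μ ν : ℕ → ℕ) : Finset ℕ :=
  (Finset.range N).filter (fun k => ν k ≤ μ k ∧ (k = 0 ∨ μ k < ν (k-1)))

/-- positions where the smaller partition `ρ` may lose a cell -/
def Fcand (N : ℕ) (μ ν : ℕ → ℕ) : Finset ℕ :=
  (Finset.range N).filter (fun k => ν k ≤ μ k ∧ μ (k+1) < ν k)

lemma card_Ecand (N : ℕ) (μ ν : ℕ → ℕ) (hμ : Antit μ) (hν : Antit ν)
    (hνr : ν (N - 1) = 0) (hN : 1 ≤ N) :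
    (Ecand N μ ν).card = (Fcand N μ ν).card + 1 := by
  have key : ∀ M : ℕ,
      ∑ k ∈ Finset.range (M+1), (if ν k ≤ μ k ∧ (k = 0 ∨ μ k < ν (k-1)) then 1 else 0)
      = (∑ k ∈ Finset.range (M+1), (if ν k ≤ μ k ∧ μ (k+1) < ν k then 1 else 0))
        + (if ν M ≤ μ (M+1) then 1 else 0) := by
    intro M
    induction M with
    | zero =>
      simp only [zero_add, Finset.sum_range_one]
      by_cases h0 : ν 0 ≤ μ 0
      · by_cases h1 : ν 0 ≤ μ 1
        · have : ¬ μ 1 < ν 0 := not_lt.mpr h1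
          simp [h0, h1, this]
        · have : μ 1 < ν 0 := not_le.mp h1
          simp [h0, h1, this]
      · have : ¬ ν 0 ≤ μ 1 := fun h => h0 (h.trans (hμ 0 1 (by omega)))
        simp [h0, this]
    | succ M ih =>
      rw [Finset.sum_range_succ, Finset.sum_range_succ (f := fun k =>
        (if ν k ≤ μ k ∧ μ (k+1) < ν k then 1 else 0)), ih]
      have e1 : (if ν (M+1) ≤ μ (M+1) ∧ ((M+1 : ℕ) = 0 ∨ μ (M+1) < ν (M+1-1)) then 1 else 0)
          = (if ν (M+1) ≤ μ (M+1) ∧ μ (M+1) < ν M then (1:ℕ) else 0) := by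
        simp only [Nat.add_sub_cancel]
        congr 1
        simp only [eq_iff_iff]
        constructor
        · rintro ⟨a, b | c⟩; · omega
          · exact ⟨a, c⟩
        · rintro ⟨a, b⟩; exact ⟨a, Or.inr b⟩
      rw [e1]
      have hg1 : ν M ≤ μ (M+1) → ν (M+1) ≤ μ (M+1) := fun h => (hν M (M+1) (by omega)).trans h
      have hg2 : ν (M+1) ≤ μ (M+2) → ν (M+1) ≤ μ (M+1) := fun h => h.trans (hμ (M+1) (M+2) (by omega))
      by_cases hA : ν M ≤ μ (M+1) <;> by_cases hB : ν (M+1) ≤ μ (M+2)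
      · simp [hA, hB, not_lt.mpr hA, not_lt.mpr hB, hg1 hA]
      · simp [hA, hB, not_lt.mpr hA, not_le.mp hB, hg1 hA]
      · simp [hA, hB, not_le.mp hA, not_lt.mpr hB, hg2 hB]
      · simp only [if_neg hA, if_neg hB, add_zero]
        by_cases hg : ν (M+1) ≤ μ (M+1) <;>
          simp [hg, not_le.mp hA, not_le.mp hB]
  have hE : (Ecand N μ ν).card
      = ∑ k ∈ Finset.range N, (if ν k ≤ μ k ∧ (k = 0 ∨ μ k < ν (k-1)) then 1 else 0) := by
    rw [Ecand, Finset.card_filter]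
  have hF : (Fcand N μ ν).card
      = ∑ k ∈ Finset.range N, (if ν k ≤ μ k ∧ μ (k+1) < ν k then 1 else 0) := by
    rw [Fcand, Finset.card_filter]
  obtain ⟨M, rfl⟩ : ∃ M, N = M + 1 := ⟨N - 1, by omega⟩
  rw [hE, hF, key M]
  have : ν M ≤ μ (M+1) := by
    simp only [Nat.add_sub_cancel] at hνr
    omega
  simp [this]

def lamOf (μ ν : ℕ → ℕ) (s : Finset ℕ) : ℕ → ℕ :=
  fun k => max (μ k) (ν k) + (if k ∈ s then 1 else 0)

def rhoOf (μ ν : ℕ → ℕ) (s : Finset ℕ) : ℕ → ℕ :=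
  fun k => min (μ k) (ν k) - (if k ∈ s then 1 else 0)

section Char

variable {N : ℕ} {μ ν : ℕ → ℕ}

lemma hmurows (hνr : ∀ k, N - 1 ≤ k → ν k = 0) (hcomp : ∀ k, μ (k+1) ≤ ν k ∧ ν k ≤ μ k + 1)
    (hN : 1 ≤ N) : ∀ k, N ≤ k → μ k = 0 := by
  intro k hk
  obtain ⟨j, rfl⟩ : ∃ j, k = j + 1 := ⟨k - 1, by omega⟩
  have := (hcomp j).1
  have := hνr j (by omega)
  omega

lemma lam_char (hμ : Antit μ) (hν : Antit ν) (hμv : ∀ k, μ k < N)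
    (hνr : ∀ k, N - 1 ≤ k → ν k = 0) (hcomp : ∀ k, μ (k+1) ≤ ν k ∧ ν k ≤ μ k + 1)
    (hN : 1 ≤ N) :
    (bx N).filter (fun l => VS μ l ∧ HS ν l)
      = (Ecand N μ ν).powerset.image (lamOf μ ν) := by
  have hμr := hmurows hνr hcomp hN
  ext l
  simp only [Finset.mem_filter, Finset.mem_image, Finset.mem_powerset, mem_bx]
  constructor
  · rintro ⟨⟨hbv, hbr⟩, hVS, hHS⟩
    refine ⟨(Finset.range N).filter (fun k => max (μ k) (ν k) < l k), ?_, ?_⟩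
    · intro k hk
      simp only [Finset.mem_filter, Finset.mem_range] at hk
      obtain ⟨hkN, hkl⟩ := hk
      simp only [Ecand, Finset.mem_filter, Finset.mem_range]
      have h1 := hVS.2 k
      have h2 := hVS.1 k
      have h3 := hHS.1 k
      refine ⟨hkN, by omega, ?_⟩
      rcases Nat.eq_zero_or_pos k with h | h
      · exact Or.inl h
      · right
        obtain ⟨j, rfl⟩ : ∃ j, k = j + 1 := ⟨k - 1, by omega⟩
        have h4 := hHS.2 j
        simp only [Nat.add_sub_cancel]
        omega
    · funext k
      simp only [lamOf, Finset.mem_filter, Finset.mem_range]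
      have h1 := hVS.2 k
      have h2 := hVS.1 k
      have h3 := hHS.1 k
      by_cases hkN : k < N
      · by_cases hkl : max (μ k) (ν k) < l k
        · have hc : k < N ∧ max (μ k) (ν k) < l k := ⟨hkN, hkl⟩
          rw [if_pos hc]; omega
        · simp only [hkN, hkl, and_false, if_false]; omega
      · have := hbr k (by omega)
        have := hμr k (by omega)
        have := hνr k (by omega)
        simp only [hkN, false_and, if_false]
        omega
  · rintro ⟨s, hs, rfl⟩
    have hsE : ∀ k, k ∈ s → k ∈ Ecand N μ ν := fun k hk => hs hk
    have hE : ∀ k, k ∈ s → k < N ∧ ν k ≤ μ k ∧ (k = 0 ∨ μ k < ν (k-1)) := by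
      intro k hk
      have := hsE k hk
      simp only [Ecand, Finset.mem_filter, Finset.mem_range] at this
      exact ⟨this.1, this.2.1, this.2.2⟩
    refine ⟨⟨?_, ?_⟩, ⟨?_, ?_⟩, ?_, ?_⟩
    · intro k
      simp only [lamOf]
      by_cases hk : k ∈ s
      · have := (hE k hk).2.1
        have := hμv k
        simp only [if_pos hk]; omega
      · simp only [if_neg hk]
        have := hμv k
        have h2 := (hcomp k).2
        omega
    · intro k hk
      have h1 := hμr k hk
      have h2 := hνr k (by omega)
      have h3 : k ∉ s := fun h => by have := (hE k h).1; omega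
      simp only [lamOf, if_neg h3, h1, h2]
      simp
    · intro k
      simp only [lamOf]; omega
    · intro k
      simp only [lamOf]
      by_cases hk : k ∈ s
      · have := (hE k hk).2.1
        simp only [if_pos hk]; omega
      · have := (hcomp k).2
        simp only [if_neg hk]; omega
    · intro k
      simp only [lamOf]; omega
    · intro k
      simp only [lamOf]
      have h1 := (hcomp (k+1)).1
      have h2 := hν (k) (k+1) (by omega)
      by_cases hk : (k+1) ∈ s
      · have h3 := (hE (k+1) hk).2
        simp only [Nat.add_sub_cancel] at h3
        have h4 : μ (k+1) < ν k := by rcases h3.2 with h | h <;> omega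
        simp only [if_pos hk]; omega
      · have := (hcomp k).1
        simp only [if_neg hk]; omega

lemma rho_char (hμ : Antit μ) (hν : Antit ν) (hμv : ∀ k, μ k < N)
    (hνr : ∀ k, N - 1 ≤ k → ν k = 0) (hcomp : ∀ k, μ (k+1) ≤ ν k ∧ ν k ≤ μ k + 1)
    (hN : 1 ≤ N) :
    (bx N).filter (fun p => HS p μ ∧ VS p ν)
      = (Fcand N μ ν).powerset.image (rhoOf μ ν) := by
  have hμr := hmurows hνr hcomp hN
  ext p
  simp only [Finset.mem_filter, Finset.mem_image, Finset.mem_powerset, mem_bx]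
  constructor
  · rintro ⟨⟨hbv, hbr⟩, hHS, hVS⟩
    refine ⟨(Finset.range N).filter (fun k => p k < min (μ k) (ν k)), ?_, ?_⟩
    · intro k hk
      simp only [Finset.mem_filter, Finset.mem_range] at hk
      obtain ⟨hkN, hkl⟩ := hk
      simp only [Fcand, Finset.mem_filter, Finset.mem_range]
      have h1 := hHS.1 k
      have h2 := hHS.2 k
      have h3 := hVS.1 k
      have h4 := hVS.2 k
      exact ⟨hkN, by omega, by omega⟩
    · funext k
      simp only [rhoOf, Finset.mem_filter, Finset.mem_range]
      have h1 := hHS.1 k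
      have h3 := hVS.1 k
      have h4 := hVS.2 k
      by_cases hkN : k < N
      · by_cases hkl : p k < min (μ k) (ν k)
        · have hc : k < N ∧ p k < min (μ k) (ν k) := ⟨hkN, hkl⟩
          rw [if_pos hc]; omega
        · simp only [hkN, hkl, and_false, if_false]; omega
      · have := hbr k (by omega)
        have := hμr k (by omega)
        simp only [hkN, false_and, if_false]
        omega
  · rintro ⟨s, hs, rfl⟩
    have hE : ∀ k, k ∈ s → k < N ∧ ν k ≤ μ k ∧ μ (k+1) < ν k := by
      intro k hk
      have := hs hk
      simp only [Fcand, Finset.mem_filter, Finset.mem_range] at this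
      exact this
    refine ⟨⟨?_, ?_⟩, ⟨?_, ?_⟩, ?_, ?_⟩
    · intro k
      simp only [rhoOf]
      have := hμv k
      omega
    · intro k hk
      have h1 := hμr k hk
      simp only [rhoOf, h1]
      omega
    · intro k
      simp only [rhoOf]; omega
    · intro k
      simp only [rhoOf]
      have h1 := hμ k (k+1) (by omega)
      have h2 := (hcomp k).1
      by_cases hk : k ∈ s
      · have := (hE k hk).2
        simp only [if_pos hk]; omega
      · simp only [if_neg hk]; omega
    · intro k
      simp only [rhoOf]; omega
    · intro k
      simp only [rhoOf]
      have h2 := (hcomp k).2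
      by_cases hk : k ∈ s
      · have := (hE k hk).2
        simp only [if_pos hk]; omega
      · simp only [if_neg hk]; omega

end Char

section LocalSum

variable {N : ℕ} {μ ν : ℕ → ℕ}

lemma sum_ind {s : Finset ℕ} (hs : s ⊆ Finset.range N) :
    (∑ k ∈ Finset.range N, if k ∈ s then (1:ℕ) else 0) = s.card := by
  rw [← Finset.card_filter]
  congr 1
  ext k
  simp only [Finset.mem_filter, Finset.mem_range, and_iff_right_iff_imp]
  exact fun h => Finset.mem_range.mp (hs h)

lemma sz_lamOf {s : Finset ℕ} (hs : s ⊆ Ecand N μ ν) :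
    sz N (lamOf μ ν s) = sz N (fun k => max (μ k) (ν k)) + s.card := by
  unfold sz lamOf
  rw [Finset.sum_add_distrib]
  congr 1
  exact sum_ind (hs.trans (Finset.filter_subset _ _))

lemma sz_rhoOf {s : Finset ℕ} (hs : s ⊆ Fcand N μ ν) :
    sz N (rhoOf μ ν s) + s.card = sz N (fun k => min (μ k) (ν k)) := by
  unfold sz rhoOf
  rw [← sum_ind (hs.trans (Finset.filter_subset _ _)), ← Finset.sum_add_distrib]
  refine Finset.sum_congr rfl (fun k _ => ?_)
  by_cases hk : k ∈ s
  · have := hs hk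
    simp only [Fcand, Finset.mem_filter, Finset.mem_range] at this
    simp only [if_pos hk]
    omega
  · simp only [if_neg hk]
    omega

lemma sz_min_max :
    sz N (fun k => max (μ k) (ν k)) + sz N (fun k => min (μ k) (ν k)) = sz N μ + sz N ν := by
  unfold sz
  rw [← Finset.sum_add_distrib, ← Finset.sum_add_distrib]
  exact Finset.sum_congr rfl (fun k _ => by omega)

lemma sz_mu_le_max : sz N μ ≤ sz N (fun k => max (μ k) (ν k)) :=
  Finset.sum_le_sum (fun k _ => le_max_left _ _)

lemma sz_nu_le_max : sz N ν ≤ sz N (fun k => max (μ k) (ν k)) :=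
  Finset.sum_le_sum (fun k _ => le_max_right _ _)

lemma sz_min_le_mu : sz N (fun k => min (μ k) (ν k)) ≤ sz N μ :=
  Finset.sum_le_sum (fun k _ => min_le_left _ _)

lemma sz_min_le_nu : sz N (fun k => min (μ k) (ν k)) ≤ sz N ν :=
  Finset.sum_le_sum (fun k _ => min_le_right _ _)

lemma sum_powerset_pow {R : Type*} [CommSemiring R] (x : R) (t : Finset ℕ) :
    ∑ s ∈ t.powerset, x ^ s.card = (1 + x) ^ t.card := by
  induction t using Finset.induction_on with
  | empty => simp
  | @insert a t ha ih =>
    rw [Finset.sum_powerset_insert ha, Finset.card_insert_of_notMem ha, pow_succ]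
    have h : ∀ s ∈ t.powerset, x ^ (insert a s).card = x * x ^ s.card := by
      intro s hs
      rw [Finset.card_insert_of_notMem (fun h => ha (Finset.mem_powerset.mp hs h)), pow_succ]
      ring
    rw [Finset.sum_congr rfl h, ← Finset.mul_sum, ih]
    ring

theorem localSum {R : Type*} [CommRing R] (u v : R) (hN : 1 ≤ N)
    (hμ : Antit μ) (hν : Antit ν) (hμv : ∀ k, μ k < N) (hνr : ∀ k, N - 1 ≤ k → ν k = 0) :
    ∑ l ∈ (bx N).filter (fun l => VS μ l ∧ HS ν l),
        u ^ (sz N l - sz N μ) * v ^ (sz N l - sz N ν)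
      = (1 + u * v) * ∑ p ∈ (bx N).filter (fun p => HS p μ ∧ VS p ν),
          u ^ (sz N ν - sz N p) * v ^ (sz N μ - sz N p) := by
  by_cases hcomp : ∀ k, μ (k+1) ≤ ν k ∧ ν k ≤ μ k + 1
  · rw [lam_char hμ hν hμv hνr hcomp hN, rho_char hμ hν hμv hνr hcomp hN]
    have hinj1 : ∀ x ∈ (Ecand N μ ν).powerset, ∀ y ∈ (Ecand N μ ν).powerset,
        lamOf μ ν x = lamOf μ ν y → x = y := by
      intro x hx y hy hxy
      ext k
      have := congrFun hxy k
      simp only [lamOf] at this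
      constructor
      · intro h
        by_contra h2
        simp only [if_pos h, if_neg h2] at this
        omega
      · intro h
        by_contra h2
        simp only [if_pos h, if_neg h2] at this
        omega
    have hinj2 : ∀ x ∈ (Fcand N μ ν).powerset, ∀ y ∈ (Fcand N μ ν).powerset,
        rhoOf μ ν x = rhoOf μ ν y → x = y := by
      intro x hx y hy hxy
      simp only [Finset.mem_powerset] at hx hy
      ext k
      have := congrFun hxy k
      simp only [rhoOf] at this
      constructor
      · intro h
        by_contra h2
        have hm := hx h
        simp only [Fcand, Finset.mem_filter, Finset.mem_range] at hm
        simp only [if_pos h, if_neg h2] at this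
        omega
      · intro h
        by_contra h2
        have hm := hy h
        simp only [Fcand, Finset.mem_filter, Finset.mem_range] at hm
        simp only [if_pos h, if_neg h2] at this
        omega
    rw [Finset.sum_image hinj1, Finset.sum_image hinj2]
    have key1 : ∀ s ∈ (Ecand N μ ν).powerset,
        u ^ (sz N (lamOf μ ν s) - sz N μ) * v ^ (sz N (lamOf μ ν s) - sz N ν)
          = (u ^ (sz N ν - sz N (fun k => min (μ k) (ν k)))
              * v ^ (sz N μ - sz N (fun k => min (μ k) (ν k)))) * (u*v) ^ s.card := by
      intro s hs
      have h1 := sz_lamOf (Finset.mem_powerset.mp hs)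
      have h2 := sz_min_max (N := N) (μ := μ) (ν := ν)
      have h3 := sz_mu_le_max (N := N) (μ := μ) (ν := ν)
      have h4 := sz_nu_le_max (N := N) (μ := μ) (ν := ν)
      have h5 := sz_min_le_mu (N := N) (μ := μ) (ν := ν)
      have h6 := sz_min_le_nu (N := N) (μ := μ) (ν := ν)
      have e1 : sz N (lamOf μ ν s) - sz N μ
          = (sz N ν - sz N (fun k => min (μ k) (ν k))) + s.card := by omega
      have e2 : sz N (lamOf μ ν s) - sz N ν
          = (sz N μ - sz N (fun k => min (μ k) (ν k))) + s.card := by omega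
      rw [e1, e2, pow_add, pow_add, mul_pow]
      ring
    have key2 : ∀ s ∈ (Fcand N μ ν).powerset,
        u ^ (sz N ν - sz N (rhoOf μ ν s)) * v ^ (sz N μ - sz N (rhoOf μ ν s))
          = (u ^ (sz N ν - sz N (fun k => min (μ k) (ν k)))
              * v ^ (sz N μ - sz N (fun k => min (μ k) (ν k)))) * (u*v) ^ s.card := by
      intro s hs
      have h1 := sz_rhoOf (Finset.mem_powerset.mp hs)
      have h5 := sz_min_le_mu (N := N) (μ := μ) (ν := ν)
      have h6 := sz_min_le_nu (N := N) (μ := μ) (ν := ν)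
      have e1 : sz N ν - sz N (rhoOf μ ν s)
          = (sz N ν - sz N (fun k => min (μ k) (ν k))) + s.card := by omega
      have e2 : sz N μ - sz N (rhoOf μ ν s)
          = (sz N μ - sz N (fun k => min (μ k) (ν k))) + s.card := by omega
      rw [e1, e2, pow_add, pow_add, mul_pow]
      ring
    rw [Finset.sum_congr rfl key1, Finset.sum_congr rfl key2, ← Finset.mul_sum,
      ← Finset.mul_sum, sum_powerset_pow, sum_powerset_pow,
      card_Ecand N μ ν hμ hν (hνr (N-1) le_rfl) hN, pow_succ]
    ring
  · obtain ⟨k, hk⟩ := not_forall.mp hcomp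
    have h1 : (bx N).filter (fun l => VS μ l ∧ HS ν l) = ∅ := by
      rw [Finset.filter_eq_empty_iff]
      rintro l _ ⟨hVS, hHS⟩
      have a1 := hVS.1 (k+1)
      have a2 := hVS.2 k
      have a3 := hHS.1 k
      have a4 := hHS.2 k
      rcases not_and_or.mp hk with h | h <;> omega
    have h2 : (bx N).filter (fun p => HS p μ ∧ VS p ν) = ∅ := by
      rw [Finset.filter_eq_empty_iff]
      rintro p _ ⟨hHS, hVS⟩
      have a1 := hHS.1 k
      have a2 := hHS.2 k
      have a3 := hVS.1 k
      have a4 := hVS.2 k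
      rcases not_and_or.mp hk with h | h <;> omega
    rw [h1, h2]
    simp

end LocalSum

/-! ### Chains -/

def zfn : ℕ → ℕ := fun _ => 0

def Nice (N : ℕ) (f : ℕ → ℕ) : Prop := Antit f ∧ f (N-1) = 0

def chbx (n N : ℕ) : Finset (ℕ → ℕ → ℕ) :=
  (Fintype.piFinset (fun _ : Fin (n+1) => bx N)).image
    (fun g k => g ⟨min k n, by omega⟩)

lemma mem_chbx {n N : ℕ} {c : ℕ → ℕ → ℕ} :
    c ∈ chbx n N ↔ (∀ k, c k ∈ bx N) ∧ (∀ k, n ≤ k → c k = c n) := by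
  constructor
  · rintro hc
    simp only [chbx, Finset.mem_image] at hc
    obtain ⟨g, hg, rfl⟩ := hc
    simp only [Fintype.mem_piFinset] at hg
    refine ⟨fun k => hg _, fun k hk => ?_⟩
    have h1 : min k n = n := by omega
    have h2 : min n n = n := by omega
    simp only [h1, h2]
  · rintro ⟨h1, h2⟩
    simp only [chbx, Finset.mem_image]
    refine ⟨fun i => c i, by simp only [Fintype.mem_piFinset]; exact fun i => h1 _, ?_⟩
    funext k
    by_cases hk : k ≤ n
    · have : min k n = k := by omega
      simp [this]
    · have h3 : min k n = n := by omega
      show c (min k n) = c k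
      rw [h3, h2 k (by omega)]

def wt {R : Type*} [CommSemiring R] (n N : ℕ) (x : ℕ → R) (c : ℕ → ℕ → ℕ) : R :=
  ∏ k ∈ Finset.range n, x k ^ (sz N (c (k+1)) - sz N (c k))

def VC (n N : ℕ) (μ : ℕ → ℕ) : Finset (ℕ → ℕ → ℕ) :=
  (chbx n N).filter (fun c => c 0 = zfn ∧ c n = μ ∧
    (∀ k, k < n → VS (c k) (c (k+1))) ∧ (∀ k, Nice N (c k)))

def HC (n N m : ℕ) (μ : ℕ → ℕ) : Finset (ℕ → ℕ → ℕ) :=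
  (chbx n N).filter (fun c => c 0 = zfn ∧ (∀ k, m ≤ k → c k = μ) ∧
    (∀ k, k < m → HS (c k) (c (k+1))))

def Stg (n N r : ℕ) (μ : ℕ → ℕ) : Finset ((ℕ → ℕ → ℕ) × (ℕ → ℕ → ℕ)) :=
  ((chbx n N) ×ˢ (chbx n N)).filter (fun fd =>
    fd.1 0 = zfn ∧ (∀ k, k < r → VS (fd.1 k) (fd.1 (k+1))) ∧
    (∀ k, r ≤ k → fd.1 k = fd.1 r) ∧ (∀ k, Nice N (fd.1 k)) ∧
    (∀ k, k < r → fd.2 k = zfn) ∧ (∀ k, r ≤ k → k < n → VS (fd.2 k) (fd.2 (k+1))) ∧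
    fd.2 n = μ ∧ (∀ k, Nice N (fd.2 k)) ∧ HS (fd.2 r) (fd.1 r))

def Wst {R : Type*} [CommSemiring R] (n N r : ℕ) (x : ℕ → R) (u : R)
    (fd : (ℕ→ℕ→ℕ) × (ℕ→ℕ→ℕ)) : R :=
  (∏ k ∈ Finset.range r, x k ^ (sz N (fd.1 (k+1)) - sz N (fd.1 k)))
    * u ^ (sz N (fd.1 r) - sz N (fd.2 r))
    * (∏ k ∈ Finset.Ico r n, x k ^ (sz N (fd.2 (k+1)) - sz N (fd.2 k)))

lemma zfn_bx {N : ℕ} : zfn ∈ bx N := by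
  simp [mem_bx, zfn]

lemma zfn_nice {N : ℕ} : Nice N zfn := ⟨fun _ _ _ => le_rfl, rfl⟩

lemma sz_zfn {N : ℕ} : sz N zfn = 0 := by simp [sz, zfn]

lemma stg0 {R : Type*} [CommSemiring R] {n N : ℕ} {μ : ℕ → ℕ} (x : ℕ → R) (u : R) :
    ∑ fd ∈ Stg n N 0 μ, Wst n N 0 x u fd = ∑ d ∈ VC n N μ, wt n N x d := by
  refine Finset.sum_nbij' (fun fd => fd.2) (fun d => ((fun _ => zfn), d)) ?_ ?_ ?_ ?_ ?_
  · rintro ⟨f, d⟩ hfd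
    simp only [Stg, Finset.mem_filter, Finset.mem_product] at hfd
    obtain ⟨⟨hf, hd⟩, h0, hstf, hconst, hnf, hz, hstd, hend, hnd, hfr⟩ := hfd
    simp only [VC, Finset.mem_filter]
    refine ⟨hd, ?_, hend, fun k hk => hstd k (by omega) hk, hnd⟩
    ·
      -- frontier : HS (d 0) (f 0), f 0 = zfn : d 0 ≤ f 0 = 0
      funext j
      have := hfr.1 j
      rw [h0] at this
      simpa [zfn] using Nat.le_zero.mp this
  · rintro d hd
    simp only [VC, Finset.mem_filter] at hd
    obtain ⟨hd, h0, hend, hst, hn⟩ := hd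
    refine Finset.mem_filter.mpr ⟨Finset.mem_product.mpr
      ⟨mem_chbx.mpr ⟨fun k => zfn_bx, fun k _ => rfl⟩, hd⟩, rfl,
      fun k hk => absurd hk (by omega), fun k _ => rfl, fun k => zfn_nice,
      fun k hk => absurd hk (by omega), fun k _ hk => hst k hk, hend, hn, ?_⟩
    show HS (d 0) zfn
    rw [h0]
    exact ⟨fun k => le_rfl, fun k => le_rfl⟩
  · rintro ⟨f, d⟩ hfd
    simp only [Stg, Finset.mem_filter, Finset.mem_product] at hfd
    obtain ⟨⟨hf, hd⟩, h0, hstf, hconst, hnf, hz, hstd, hend, hnd, hfr⟩ := hfd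
    have : f = fun _ => zfn := by
      funext k
      rw [hconst k (by omega), h0]
    simp [this]
  · rintro d hd
    rfl
  · rintro ⟨f, d⟩ hfd
    simp only [Stg, Finset.mem_filter, Finset.mem_product] at hfd
    obtain ⟨⟨hf, hd⟩, h0, hstf, hconst, hnf, hz, hstd, hend, hnd, hfr⟩ := hfd
    simp only [Wst, wt]
    have hd0 : d 0 = zfn := by
      funext j
      have := hfr.1 j
      rw [h0] at this
      simpa [zfn] using Nat.le_zero.mp this
    rw [h0, hd0]
    simp only [Finset.range_zero, Finset.prod_empty, one_mul, Nat.sub_self, pow_zero]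
    rw [← Finset.range_eq_Ico]

lemma le_chain {c : ℕ → ℕ → ℕ} {a b : ℕ} (hab : a ≤ b)
    (h : ∀ k, a ≤ k → k < b → ∀ j, c k j ≤ c (k+1) j) (j : ℕ) : c a j ≤ c b j := by
  induction b, hab using Nat.le_induction with
  | base => exact le_rfl
  | succ b hab ih =>
    exact le_trans (ih (fun k hk hk2 => h k hk (by omega))) (h b hab (by omega) j)

lemma vchain_val_le {g : ℕ → ℕ → ℕ} {r : ℕ} (h0 : g 0 = zfn)
    (hst : ∀ k, k < r → VS (g k) (g (k+1))) : ∀ j, j ≤ r → ∀ i, g j i ≤ j := by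
  intro j
  induction j with
  | zero => intro _ i; rw [h0]; exact le_rfl
  | succ j ih =>
    intro hj i
    have := (hst j (by omega)).2 i
    have := ih (by omega) i
    omega

lemma stgn {R : Type*} [CommSemiring R] {n N : ℕ} {μ : ℕ → ℕ}
    (hμbx : μ ∈ bx N) (hnμ : Nice N μ) (x : ℕ → R) (u : R) :
    ∑ fd ∈ Stg n N n μ, Wst n N n x u fd
      = ∑ p ∈ ((bx N).filter (fun l => HS μ l)).sigma (fun l => VC n N l),
          wt n N x p.2 * u ^ (sz N p.1 - sz N μ) := by
  refine Finset.sum_nbij' (fun fd => ⟨fd.1 n, fd.1⟩)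
    (fun p => (p.2, fun k => if k < n then zfn else μ)) ?_ ?_ ?_ ?_ ?_
  · rintro ⟨f, d⟩ hfd
    simp only [Stg, Finset.mem_filter, Finset.mem_product] at hfd
    obtain ⟨⟨hf, hd⟩, h0, hstf, hconst, hnf, hz, hstd, hend, hnd, hfr⟩ := hfd
    refine Finset.mem_sigma.mpr ⟨Finset.mem_filter.mpr ⟨(mem_chbx.mp hf).1 n, ?_⟩,
      Finset.mem_filter.mpr ⟨hf, h0, rfl, fun k hk => hstf k hk, hnf⟩⟩
    rw [← hend]
    exact hfr
  · rintro ⟨l, f⟩ hp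
    simp only [Finset.mem_sigma, Finset.mem_filter, VC] at hp
    obtain ⟨⟨hlbx, hHS⟩, hf, h0, hend, hst, hn⟩ := hp
    refine Finset.mem_filter.mpr ⟨Finset.mem_product.mpr ⟨hf, ?_⟩, h0,
      fun k hk => hst k hk, fun k hk => (mem_chbx.mp hf).2 k hk, hn,
      fun k hk => by simp [if_pos hk], fun k hk1 hk2 => absurd hk1 (by omega),
      by simp, fun k => ?_, ?_⟩
    · refine mem_chbx.mpr ⟨fun k => ?_, fun k hk => ?_⟩
      · by_cases hk : k < n
        · simp only [if_pos hk]; exact zfn_bx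
        · simp only [if_neg hk]; exact hμbx
      · have h1 : ¬ (k < n) := by omega
        have h2 : ¬ (n < n) := by omega
        simp only [if_neg h1, if_neg h2]
    · by_cases hk : k < n
      · simp only [if_pos hk]; exact zfn_nice
      · simp only [if_neg hk]; exact hnμ
    · show HS (if n < n then zfn else μ) (f n)
      simp only [lt_irrefl, if_false]
      rw [hend]
      exact hHS
  · rintro ⟨f, d⟩ hfd
    simp only [Stg, Finset.mem_filter, Finset.mem_product] at hfd
    obtain ⟨⟨hf, hd⟩, h0, hstf, hconst, hnf, hz, hstd, hend, hnd, hfr⟩ := hfd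
    have : (fun k => if k < n then zfn else μ) = d := by
      funext k
      by_cases hk : k < n
      · simp only [if_pos hk]; exact (hz k hk).symm
      · simp only [if_neg hk]
        rw [(mem_chbx.mp hd).2 k (by omega), hend]
    rw [this]
  · rintro ⟨l, f⟩ hp
    simp only [Finset.mem_sigma, Finset.mem_filter, VC] at hp
    obtain ⟨⟨hlbx, hHS⟩, hf, h0, hend, hst, hn⟩ := hp
    simp only [Sigma.mk.inj_iff, heq_eq_eq]
    exact ⟨hend, trivial⟩
  · rintro ⟨f, d⟩ hfd
    simp only [Stg, Finset.mem_filter, Finset.mem_product] at hfd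
    obtain ⟨⟨hf, hd⟩, h0, hstf, hconst, hnf, hz, hstd, hend, hnd, hfr⟩ := hfd
    simp only [Wst, wt]
    rw [hend]
    have : Finset.Ico n n = ∅ := by simp
    rw [this, Finset.prod_empty, mul_one]

lemma antit_of_step {f : ℕ → ℕ} (h : ∀ k, f (k+1) ≤ f k) : Antit f := by
  intro i j hij
  induction j, hij using Nat.le_induction with
  | base => exact le_rfl
  | succ j hij ih => exact le_trans (h j) ih

lemma fiberR {R : Type*} [CommRing R] {n N r : ℕ} {μ : ℕ → ℕ} {g e : ℕ → ℕ → ℕ}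
    (hr : r < n)
    (hg : g ∈ chbx n N) (hg0 : g 0 = zfn) (hgst : ∀ k, k < r → VS (g k) (g (k+1)))
    (hgc : ∀ k, r ≤ k → g k = g r) (hgn : ∀ k, Nice N (g k))
    (he : e ∈ chbx n N) (hez : ∀ k, k ≤ r → e k = zfn)
    (hest : ∀ k, r+1 ≤ k → k < n → VS (e k) (e (k+1))) (hen : e n = μ)
    (hene : ∀ k, Nice N (e k)) (x : ℕ → R) (u : R) :
    ∑ fd ∈ (Stg n N r μ).filter
        (fun fd => (fd.1, fun k => if k = r then zfn else fd.2 k) = (g, e)),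
      Wst n N r x u fd
    = ∑ p ∈ (bx N).filter (fun p => HS p (g r) ∧ VS p (e (r+1))),
        ((∏ k ∈ Finset.range r, x k ^ (sz N (g (k+1)) - sz N (g k)))
          * (∏ k ∈ Finset.Ico (r+1) n, x k ^ (sz N (e (k+1)) - sz N (e k))))
        * (x r ^ (sz N (e (r+1)) - sz N p) * u ^ (sz N (g r) - sz N p)) := by
  refine Finset.sum_nbij' (fun fd => fd.2 r)
    (fun p => (g, fun k => if k = r then p else e k)) ?_ ?_ ?_ ?_ ?_
  · rintro ⟨f, d⟩ hfd
    rw [Finset.mem_filter, Prod.mk.injEq] at hfd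
    obtain ⟨hfd, hpf, hpe⟩ := hfd
    simp only [Stg, Finset.mem_filter, Finset.mem_product] at hfd
    obtain ⟨⟨hf, hd⟩, h0, hstf, hconst, hnf, hz, hstd, hend, hnd, hfr⟩ := hfd
    have hdk : ∀ k, k ≠ r → d k = e k := by
      intro k hk
      have := congrFun hpe k
      simpa [if_neg hk] using this
    refine Finset.mem_filter.mpr ⟨(mem_chbx.mp hd).1 r, ?_, ?_⟩
    · exact hpf ▸ hfr
    · have h2 := hstd r le_rfl hr
      rwa [hdk (r+1) (by omega)] at h2
  · rintro p hp
    rw [Finset.mem_filter] at hp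
    obtain ⟨hpbx, hpHS, hpVS⟩ := hp
    have hpA : Antit p := antit_of_step (fun k => le_trans (hpHS.1 (k+1)) (hpHS.2 k))
    have hpN : p (N-1) = 0 := by
      have := hpHS.1 (N-1)
      have := (hgn r).2
      omega
    rw [Finset.mem_filter, Prod.mk.injEq]
    refine ⟨?_, rfl, ?_⟩
    · refine Finset.mem_filter.mpr ⟨Finset.mem_product.mpr ⟨hg, ?_⟩, hg0,
        fun k hk => hgst k hk, fun k hk => hgc k hk, hgn,
        ?_, ?_, ?_, ?_, ?_⟩
      · refine mem_chbx.mpr ⟨fun k => ?_, fun k hk => ?_⟩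
        · by_cases hk : k = r
          · simp only [if_pos hk]; exact hpbx
          · simp only [if_neg hk]; exact (mem_chbx.mp he).1 k
        · have h1 : k ≠ r := by omega
          have h2 : n ≠ r := by omega
          simp only [if_neg h1, if_neg h2]
          exact (mem_chbx.mp he).2 k hk
      · intro k hk
        have h1 : k ≠ r := by omega
        simp only [if_neg h1]
        exact hez k (by omega)
      · intro k hk1 hk2
        rcases Nat.eq_or_lt_of_le hk1 with h | h
        · have h1 : k = r := h.symm
          subst h1
          have h2 : k + 1 ≠ k := by omega
          show VS (if k = k then p else e k) (if k + 1 = k then p else e (k+1))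
          rw [if_pos rfl, if_neg h2]
          exact hpVS
        · have h1 : k ≠ r := by omega
          have h2 : k + 1 ≠ r := by omega
          simp only [if_neg h1, if_neg h2]
          exact hest k (by omega) hk2
      · have h1 : n ≠ r := by omega
        simp only [if_neg h1]
        exact hen
      · intro k
        by_cases hk : k = r
        · simp only [if_pos hk]; exact ⟨hpA, hpN⟩
        · simp only [if_neg hk]; exact hene k
      · show HS (if r = r then p else e r) (g r)
        simp only [if_pos rfl]
        exact hpHS
    · funext k
      by_cases hk : k = r
      · subst hk
        simp only [if_pos rfl]
        exact (hez k le_rfl).symm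
      · simp only [if_neg hk]
  · rintro ⟨f, d⟩ hfd
    rw [Finset.mem_filter, Prod.mk.injEq] at hfd
    obtain ⟨hfd, hpf, hpe⟩ := hfd
    have hdk : ∀ k, k ≠ r → d k = e k := by
      intro k hk
      have := congrFun hpe k
      simpa [if_neg hk] using this
    rw [Prod.mk.injEq]
    refine ⟨hpf.symm, ?_⟩
    funext k
    by_cases hk : k = r
    · subst hk
      simp
    · simp only [if_neg hk]
      exact (hdk k hk).symm
  · rintro p hp
    simp
  · rintro ⟨f, d⟩ hfd
    rw [Finset.mem_filter, Prod.mk.injEq] at hfd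
    obtain ⟨hfd, hpf, hpe⟩ := hfd
    simp only [Stg, Finset.mem_filter, Finset.mem_product] at hfd
    obtain ⟨⟨hf, hd⟩, h0, hstf, hconst, hnf, hz, hstd, hend, hnd, hfr⟩ := hfd
    have hdk : ∀ k, k ≠ r → d k = e k := by
      intro k hk
      have := congrFun hpe k
      simpa [if_neg hk] using this
    simp only [Wst]
    subst hpf
    rw [Finset.prod_eq_prod_Ico_succ_bot hr]
    rw [hdk (r+1) (by omega)]
    have hprod : ∏ k ∈ Finset.Ico (r+1) n, x k ^ (sz N (d (k+1)) - sz N (d k))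
        = ∏ k ∈ Finset.Ico (r+1) n, x k ^ (sz N (e (k+1)) - sz N (e k)) := by
      refine Finset.prod_congr rfl (fun k hk => ?_)
      rw [Finset.mem_Ico] at hk
      rw [hdk k (by omega), hdk (k+1) (by omega)]
    rw [hprod]
    ring

lemma fiberR1 {R : Type*} [CommRing R] {n N r : ℕ} {μ : ℕ → ℕ} {g e : ℕ → ℕ → ℕ}
    (hr : r < n) (hN : N = n + 2) (hrows : ∀ k, n ≤ k → μ k = 0)
    (hg : g ∈ chbx n N) (hg0 : g 0 = zfn) (hgst : ∀ k, k < r → VS (g k) (g (k+1)))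
    (hgc : ∀ k, r ≤ k → g k = g r) (hgn : ∀ k, Nice N (g k))
    (he : e ∈ chbx n N) (hez : ∀ k, k ≤ r → e k = zfn)
    (hest : ∀ k, r+1 ≤ k → k < n → VS (e k) (e (k+1))) (hen : e n = μ)
    (hene : ∀ k, Nice N (e k)) (x : ℕ → R) (u : R) :
    ∑ fd ∈ (Stg n N (r+1) μ).filter
        (fun fd => ((fun k => if k ≤ r then fd.1 k else fd.1 r), fd.2) = (g, e)),
      Wst n N (r+1) x u fd
    = ∑ l ∈ (bx N).filter (fun l => VS (g r) l ∧ HS (e (r+1)) l),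
        ((∏ k ∈ Finset.range r, x k ^ (sz N (g (k+1)) - sz N (g k)))
          * (∏ k ∈ Finset.Ico (r+1) n, x k ^ (sz N (e (k+1)) - sz N (e k))))
        * (x r ^ (sz N l - sz N (g r)) * u ^ (sz N l - sz N (e (r+1)))) := by
  have heμ : ∀ j, e (r+1) j ≤ μ j := by
    intro j
    rw [← hen]
    exact le_chain (by omega) (fun k hk1 hk2 j' => (hest k hk1 hk2).1 j') j
  refine Finset.sum_nbij' (fun fd => fd.1 (r+1))
    (fun l => ((fun k => if k ≤ r then g k else l), e)) ?_ ?_ ?_ ?_ ?_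
  · rintro ⟨f, d⟩ hfd
    rw [Finset.mem_filter, Prod.mk.injEq] at hfd
    obtain ⟨hfd, hpf, hpe⟩ := hfd
    simp only [Stg, Finset.mem_filter, Finset.mem_product] at hfd
    obtain ⟨⟨hf, hd⟩, h0, hstf, hconst, hnf, hz, hstd, hend, hnd, hfr⟩ := hfd
    have hfk : ∀ k, k ≤ r → f k = g k := by
      intro k hk
      have := congrFun hpf k
      simpa [if_pos hk] using this
    refine Finset.mem_filter.mpr ⟨(mem_chbx.mp hf).1 (r+1), ?_, ?_⟩
    · have h2 := hstf r (by omega)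
      rwa [hfk r le_rfl] at h2
    · subst hpe
      exact hfr
  · rintro l hl
    rw [Finset.mem_filter] at hl
    obtain ⟨hlbx, hlVS, hlHS⟩ := hl
    have hlA : Antit l := antit_of_step (fun k => le_trans (hlHS.2 k) (hlHS.1 k))
    have hlN : l (N-1) = 0 := by
      have h1 := hlHS.2 n
      have h2 : n + 1 = N - 1 := by omega
      rw [h2] at h1
      have h3 := heμ n
      have h4 := hrows n le_rfl
      omega
    rw [Finset.mem_filter, Prod.mk.injEq]
    refine ⟨?_, ?_, rfl⟩
    · refine Finset.mem_filter.mpr ⟨Finset.mem_product.mpr ⟨?_, he⟩, ?_,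
        ?_, ?_, ?_, fun k hk => hez k (by omega),
        fun k hk1 hk2 => hest k hk1 hk2, hen, hene, ?_⟩
      · refine mem_chbx.mpr ⟨fun k => ?_, fun k hk => ?_⟩
        · by_cases hk : k ≤ r
          · simp only [if_pos hk]; exact (mem_chbx.mp hg).1 k
          · simp only [if_neg hk]; exact hlbx
        · have h1 : ¬ (k ≤ r) := by omega
          have h2 : ¬ (n ≤ r) := by omega
          simp only [if_neg h1, if_neg h2]
      · have h1 : (0:ℕ) ≤ r := by omega
        simp only [if_pos h1]
        exact hg0
      · intro k hk
        rcases Nat.lt_or_ge k r with h | h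
        · have h1 : k ≤ r := by omega
          have h2 : k + 1 ≤ r := by omega
          simp only [if_pos h1, if_pos h2]
          exact hgst k h
        · have h1 : k = r := by omega
          subst h1
          have h2 : ¬ (k + 1 ≤ k) := by omega
          simp only [if_pos le_rfl, if_neg h2]
          exact hlVS
      · intro k hk
        have h1 : ¬ (k ≤ r) := by omega
        have h2 : ¬ (r + 1 ≤ r) := by omega
        simp only [if_neg h1, if_neg h2]
      · intro k
        by_cases hk : k ≤ r
        · simp only [if_pos hk]; exact hgn k
        · simp only [if_neg hk]; exact ⟨hlA, hlN⟩
      · show HS (e (r+1)) (if r + 1 ≤ r then g (r+1) else l)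
        have h2 : ¬ (r + 1 ≤ r) := by omega
        simp only [if_neg h2]
        exact hlHS
    · funext k
      by_cases hk : k ≤ r
      · simp only [if_pos hk]
      · have h1 : (r:ℕ) ≤ r := le_rfl
        simp only [if_neg hk, if_pos h1]
        exact (hgc k (by omega)).symm
  · rintro ⟨f, d⟩ hfd
    rw [Finset.mem_filter, Prod.mk.injEq] at hfd
    obtain ⟨hfd, hpf, hpe⟩ := hfd
    simp only [Stg, Finset.mem_filter, Finset.mem_product] at hfd
    obtain ⟨⟨hf, hd⟩, h0, hstf, hconst, hnf, hz, hstd, hend, hnd, hfr⟩ := hfd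
    have hfk : ∀ k, k ≤ r → f k = g k := by
      intro k hk
      have := congrFun hpf k
      simpa [if_pos hk] using this
    rw [Prod.mk.injEq]
    refine ⟨?_, hpe.symm⟩
    funext k
    by_cases hk : k ≤ r
    · simp only [if_pos hk]
      exact (hfk k hk).symm
    · simp only [if_neg hk]
      exact (hconst k (by omega)).symm
  · rintro l hl
    have h2 : ¬ (r + 1 ≤ r) := by omega
    simp only [if_neg h2]
  · rintro ⟨f, d⟩ hfd
    rw [Finset.mem_filter, Prod.mk.injEq] at hfd
    obtain ⟨hfd, hpf, hpe⟩ := hfd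
    simp only [Stg, Finset.mem_filter, Finset.mem_product] at hfd
    obtain ⟨⟨hf, hd⟩, h0, hstf, hconst, hnf, hz, hstd, hend, hnd, hfr⟩ := hfd
    have hfk : ∀ k, k ≤ r → f k = g k := by
      intro k hk
      have := congrFun hpf k
      simpa [if_pos hk] using this
    simp only [Wst]
    subst hpe
    rw [Finset.prod_range_succ]
    have hprod : ∏ k ∈ Finset.range r, x k ^ (sz N (f (k+1)) - sz N (f k))
        = ∏ k ∈ Finset.range r, x k ^ (sz N (g (k+1)) - sz N (g k)) := by
      refine Finset.prod_congr rfl (fun k hk => ?_)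
      rw [Finset.mem_range] at hk
      rw [hfk k (by omega), hfk (k+1) (by omega)]
    rw [hprod, hfk r le_rfl]
    ring

lemma stgstep_core {R : Type*} [CommRing R] {n N r : ℕ} {μ : ℕ → ℕ} {g e : ℕ → ℕ → ℕ}
    (hr : r < n) (hN : N = n + 2) (hrows : ∀ k, n ≤ k → μ k = 0)
    (hg : g ∈ chbx n N) (hg0 : g 0 = zfn) (hgst : ∀ k, k < r → VS (g k) (g (k+1)))
    (hgc : ∀ k, r ≤ k → g k = g r) (hgn : ∀ k, Nice N (g k))
    (he : e ∈ chbx n N) (hez : ∀ k, k ≤ r → e k = zfn)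
    (hest : ∀ k, r+1 ≤ k → k < n → VS (e k) (e (k+1))) (hen : e n = μ)
    (hene : ∀ k, Nice N (e k)) (x : ℕ → R) (u : R) :
    ∑ fd ∈ (Stg n N (r+1) μ).filter
        (fun fd => ((fun k => if k ≤ r then fd.1 k else fd.1 r), fd.2) = (g, e)),
      Wst n N (r+1) x u fd
    = (∑ fd ∈ (Stg n N r μ).filter
        (fun fd => (fd.1, fun k => if k = r then zfn else fd.2 k) = (g, e)),
      Wst n N r x u fd) * (1 + x r * u) := by
  rw [fiberR hr hg hg0 hgst hgc hgn he hez hest hen hene x u,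
      fiberR1 hr hN hrows hg hg0 hgst hgc hgn he hez hest hen hene x u]
  rw [← Finset.mul_sum, ← Finset.mul_sum]
  have hval : ∀ k, g r k < N := by
    intro k
    have := vchain_val_le hg0 hgst r le_rfl k
    omega
  have hrw : ∀ k, N - 1 ≤ k → e (r+1) k = 0 := by
    intro k hk
    have h1 := (hene (r+1)).1 (N-1) k hk
    have h2 := (hene (r+1)).2
    omega
  have hloc := localSum (R := R) (N := N) (μ := g r) (ν := e (r+1)) (x r) u
      (by omega) (hgn r).1 (hene (r+1)).1 hval hrw
  rw [hloc]
  ring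

lemma stgstep {R : Type*} [CommRing R] {n N r : ℕ} {μ : ℕ → ℕ}
    (hr : r < n) (hN : N = n + 2) (hrows : ∀ k, n ≤ k → μ k = 0)
    (x : ℕ → R) (u : R) :
    ∑ fd ∈ Stg n N (r+1) μ, Wst n N (r+1) x u fd
      = (∑ fd ∈ Stg n N r μ, Wst n N r x u fd) * (1 + x r * u) := by
  have mapsR : ∀ fd ∈ Stg n N r μ,
      (fd.1, fun k => if k = r then zfn else fd.2 k) ∈ (chbx n N) ×ˢ (chbx n N) := by
    rintro ⟨f, d⟩ hfd
    simp only [Stg, Finset.mem_filter, Finset.mem_product] at hfd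
    obtain ⟨⟨hf, hd⟩, _, _, _, _, _, _, _, _, _⟩ := hfd
    refine Finset.mem_product.mpr ⟨hf, mem_chbx.mpr ⟨fun k => ?_, fun k hk => ?_⟩⟩
    · by_cases hk : k = r
      · simp only [if_pos hk]; exact zfn_bx
      · simp only [if_neg hk]; exact (mem_chbx.mp hd).1 k
    · have h1 : k ≠ r := by omega
      have h2 : n ≠ r := by omega
      simp only [if_neg h1, if_neg h2]
      exact (mem_chbx.mp hd).2 k hk
  have mapsR1 : ∀ fd ∈ Stg n N (r+1) μ,
      ((fun k => if k ≤ r then fd.1 k else fd.1 r), fd.2) ∈ (chbx n N) ×ˢ (chbx n N) := by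
    rintro ⟨f, d⟩ hfd
    simp only [Stg, Finset.mem_filter, Finset.mem_product] at hfd
    obtain ⟨⟨hf, hd⟩, _, _, _, _, _, _, _, _, _⟩ := hfd
    refine Finset.mem_product.mpr ⟨mem_chbx.mpr ⟨fun k => ?_, fun k hk => ?_⟩, hd⟩
    · by_cases hk : k ≤ r
      · simp only [if_pos hk]; exact (mem_chbx.mp hf).1 k
      · simp only [if_neg hk]; exact (mem_chbx.mp hf).1 r
    · have h1 : ¬ (k ≤ r) := by omega
      have h2 : ¬ (n ≤ r) := by omega
      simp only [if_neg h1, if_neg h2]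
  rw [← Finset.sum_fiberwise_of_maps_to mapsR1 (Wst n N (r+1) x u),
      ← Finset.sum_fiberwise_of_maps_to mapsR (Wst n N r x u), Finset.sum_mul]
  refine Finset.sum_congr rfl (fun y _ => ?_)
  obtain ⟨g, e⟩ := y
  by_cases h1 : ((Stg n N r μ).filter
      (fun fd => (fd.1, fun k => if k = r then zfn else fd.2 k) = (g, e))).Nonempty
  · obtain ⟨⟨f, d⟩, hfd⟩ := h1
    rw [Finset.mem_filter, Prod.mk.injEq] at hfd
    obtain ⟨hfd, hpf, hpe⟩ := hfd
    simp only at hpf hpe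
    subst hpf
    subst hpe
    simp only [Stg, Finset.mem_filter, Finset.mem_product] at hfd
    obtain ⟨⟨hf, hd⟩, h0, hstf, hconst, hnf, hz, hstd, hend, hnd, hfr⟩ := hfd
    refine stgstep_core hr hN hrows hf h0 hstf hconst hnf ?_ ?_ ?_ ?_ ?_ x u
    · refine mem_chbx.mpr ⟨fun k => ?_, fun k hk => ?_⟩
      · by_cases hk : k = r
        · simp only [if_pos hk]; exact zfn_bx
        · simp only [if_neg hk]; exact (mem_chbx.mp hd).1 k
      · have h1 : k ≠ r := by omega
        have h2 : n ≠ r := by omega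
        simp only [if_neg h1, if_neg h2]
        exact (mem_chbx.mp hd).2 k hk
    · intro k hk
      by_cases hk2 : k = r
      · simp only [if_pos hk2]
      · simp only [if_neg hk2]
        exact hz k (by omega)
    · intro k hk1 hk2
      have ha : k ≠ r := by omega
      have hb : k + 1 ≠ r := by omega
      simp only [if_neg ha, if_neg hb]
      exact hstd k (by omega) hk2
    · have h2 : n ≠ r := by omega
      simp only [if_neg h2]
      exact hend
    · intro k
      by_cases hk : k = r
      · simp only [if_pos hk]; exact zfn_nice
      · simp only [if_neg hk]; exact hnd k
  · by_cases h2 : ((Stg n N (r+1) μ).filter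
        (fun fd => ((fun k => if k ≤ r then fd.1 k else fd.1 r), fd.2) = (g, e))).Nonempty
    · obtain ⟨⟨f, d⟩, hfd⟩ := h2
      rw [Finset.mem_filter, Prod.mk.injEq] at hfd
      obtain ⟨hfd, hpf, hpe⟩ := hfd
      simp only at hpf hpe
      subst hpf
      subst hpe
      simp only [Stg, Finset.mem_filter, Finset.mem_product] at hfd
      obtain ⟨⟨hf, hd⟩, h0, hstf, hconst, hnf, hz, hstd, hend, hnd, hfr⟩ := hfd
      refine stgstep_core hr hN hrows ?_ ?_ ?_ ?_ ?_ hd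
        (fun k hk => hz k (by omega)) (fun k hk1 hk2 => hstd k hk1 hk2) hend hnd x u
      · refine mem_chbx.mpr ⟨fun k => ?_, fun k hk => ?_⟩
        · by_cases hk : k ≤ r
          · simp only [if_pos hk]; exact (mem_chbx.mp hf).1 k
          · simp only [if_neg hk]; exact (mem_chbx.mp hf).1 r
        · have ha : ¬ (k ≤ r) := by omega
          have hb : ¬ (n ≤ r) := by omega
          simp only [if_neg ha, if_neg hb]
      · have ha : (0:ℕ) ≤ r := by omega
        simp only [if_pos ha]
        exact h0
      · intro k hk
        have ha : k ≤ r := by omega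
        have hb : k + 1 ≤ r := by omega
        simp only [if_pos ha, if_pos hb]
        exact hstf k (by omega)
      · intro k hk
        by_cases hk2 : k ≤ r
        · have ha : k = r := by omega
          subst ha
          simp
        · simp only [if_neg hk2, if_pos (le_refl r)]
      · intro k
        by_cases hk : k ≤ r
        · simp only [if_pos hk]; exact hnf k
        · simp only [if_neg hk]; exact hnf r
    · rw [Finset.not_nonempty_iff_eq_empty.mp h1, Finset.not_nonempty_iff_eq_empty.mp h2,
        Finset.sum_empty, Finset.sum_empty, zero_mul]

lemma pieri {R : Type*} [CommRing R] {n N : ℕ} {μ : ℕ → ℕ} (hN : N = n + 2)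
    (hμbx : μ ∈ bx N) (hnμ : Nice N μ) (hrows : ∀ k, n ≤ k → μ k = 0)
    (x : ℕ → R) (u : R) :
    (∑ d ∈ VC n N μ, wt n N x d) * ∏ i ∈ Finset.range n, (1 + x i * u)
      = ∑ l ∈ (bx N).filter (fun l => HS μ l),
          (∑ d ∈ VC n N l, wt n N x d) * u ^ (sz N l - sz N μ) := by
  have key : ∀ r, r ≤ n → ∑ fd ∈ Stg n N r μ, Wst n N r x u fd
      = (∑ d ∈ VC n N μ, wt n N x d) * ∏ i ∈ Finset.range r, (1 + x i * u) := by
    intro r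
    induction r with
    | zero => intro _; simpa using (stg0 x u)
    | succ r ih =>
      intro hrn
      rw [stgstep (by omega) hN hrows x u, ih (by omega), Finset.prod_range_succ, mul_assoc]
  rw [← key n le_rfl, stgn hμbx hnμ x u, Finset.sum_sigma]
  refine Finset.sum_congr rfl (fun l hl => ?_)
  rw [Finset.sum_mul]

lemma hc_props {n N m : ℕ} {μ : ℕ → ℕ} {c : ℕ → ℕ → ℕ} (hm : m ≤ n) (hN : N = n + 2)
    (hc : c ∈ HC n N m μ) :
    μ ∈ bx N ∧ Antit μ ∧ (∀ k, n ≤ k → μ k = 0) ∧ Nice N μ := by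
  simp only [HC, Finset.mem_filter] at hc
  obtain ⟨hcb, h0, hconst, hst⟩ := hc
  have hrows : ∀ j, j ≤ m → ∀ i, j ≤ i → c j i = 0 := by
    intro j
    induction j with
    | zero => intro _ i _; rw [h0]; rfl
    | succ j ih =>
      intro hj i hi
      obtain ⟨i', rfl⟩ : ∃ i', i = i' + 1 := ⟨i - 1, by omega⟩
      have h1 := (hst j (by omega)).2 i'
      have h2 := ih (by omega) i' (by omega)
      omega
  have hμc : μ = c m := (hconst m le_rfl).symm
  have hant : Antit μ := by
    rcases Nat.eq_zero_or_pos m with h | h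
    · subst h
      rw [hμc, h0]
      exact fun _ _ _ => le_rfl
    · obtain ⟨m', rfl⟩ : ∃ m', m = m' + 1 := ⟨m - 1, by omega⟩
      rw [hμc]
      refine antit_of_step (fun k => ?_)
      have h1 := (hst m' (by omega)).2 k
      have h2 := (hst m' (by omega)).1 k
      omega
  have hrw : ∀ k, n ≤ k → μ k = 0 := by
    intro k hk
    rw [hμc]
    exact hrows m le_rfl k (by omega)
  refine ⟨by rw [hμc]; exact (mem_chbx.mp hcb).1 m, hant, hrw, hant, hrw (N-1) (by omega)⟩

lemma hc_zero {n N : ℕ} {μ : ℕ → ℕ} :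
    HC n N 0 μ = if μ = zfn then {fun _ => zfn} else (∅ : Finset (ℕ → ℕ → ℕ)) := by
  by_cases hμ : μ = zfn
  · subst hμ
    rw [if_pos rfl]
    ext c
    simp only [HC, Finset.mem_filter, Finset.mem_singleton]
    constructor
    · rintro ⟨hcb, h0, hconst, hst⟩
      funext k
      exact hconst k (by omega)
    · rintro rfl
      exact ⟨mem_chbx.mpr ⟨fun k => zfn_bx, fun k _ => rfl⟩, rfl, fun k _ => rfl,
        fun k hk => absurd hk (by omega)⟩
  · rw [if_neg hμ]
    ext c
    simp only [HC, Finset.mem_filter, Finset.notMem_empty, iff_false]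
    rintro ⟨hcb, h0, hconst, hst⟩
    exact hμ ((hconst 0 le_rfl).symm.trans h0)

lemma vc_zfn {n N : ℕ} : VC n N zfn = ({fun _ => zfn} : Finset (ℕ → ℕ → ℕ)) := by
  ext c
  simp only [VC, Finset.mem_filter, Finset.mem_singleton]
  constructor
  · rintro ⟨hcb, h0, hend, hst, hn⟩
    funext k j
    rcases le_or_gt n k with h | h
    · rw [(mem_chbx.mp hcb).2 k h, hend]
    · have h1 : c k j ≤ c n j := le_chain (by omega) (fun k' hk1 hk2 j' => (hst k' hk2).1 j') j
      rw [hend] at h1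
      simpa [zfn] using Nat.le_zero.mp h1
  · rintro rfl
    exact ⟨mem_chbx.mpr ⟨fun k => zfn_bx, fun k _ => rfl⟩, rfl, rfl,
      fun k _ => ⟨fun j => le_rfl, fun j => by simp [zfn]⟩, fun k => zfn_nice⟩

lemma hc_split {R : Type*} [CommSemiring R] {n N m : ℕ} {l : ℕ → ℕ} (hm : m < n)
    (hl : l ∈ bx N) (y : ℕ → R) :
    ∑ c ∈ HC n N (m+1) l, wt n N y c
      = ∑ μ ∈ (bx N).filter (fun μ => HS μ l),
          (∑ c ∈ HC n N m μ, wt n N y c) * y m ^ (sz N l - sz N μ) := by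
  have hr : ∀ μ, (∑ c ∈ HC n N m μ, wt n N y c) * y m ^ (sz N l - sz N μ)
      = ∑ c ∈ HC n N m μ, wt n N y c * y m ^ (sz N l - sz N μ) :=
    fun μ => Finset.sum_mul _ _ _
  rw [Finset.sum_congr rfl (fun μ _ => hr μ), Finset.sum_sigma']
  refine (Finset.sum_nbij' (fun p => fun k => if k ≤ m then p.2 k else l)
    (fun c => ⟨c m, fun k => if k ≤ m then c k else c m⟩) ?_ ?_ ?_ ?_ ?_).symm
  · rintro ⟨μ, c⟩ hp
    rw [Finset.mem_sigma] at hp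
    obtain ⟨hμ, hc⟩ := hp
    rw [Finset.mem_filter] at hμ
    obtain ⟨hμbx, hμHS⟩ := hμ
    simp only [HC, Finset.mem_filter] at hc
    obtain ⟨hcb, h0, hconst, hst⟩ := hc
    refine Finset.mem_filter.mpr ⟨mem_chbx.mpr ⟨fun k => ?_, fun k hk => ?_⟩, ?_, ?_, ?_⟩
    · by_cases hk : k ≤ m
      · simp only [if_pos hk]; exact (mem_chbx.mp hcb).1 k
      · simp only [if_neg hk]; exact hl
    · have h1 : ¬ (k ≤ m) := by omega
      have h2 : ¬ (n ≤ m) := by omega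
      simp only [if_neg h1, if_neg h2]
    · have h1 : (0:ℕ) ≤ m := by omega
      simp only [if_pos h1]
      exact h0
    · intro k hk
      have h1 : ¬ (k ≤ m) := by omega
      simp only [if_neg h1]
    · intro k hk
      rcases Nat.lt_or_ge k m with h | h
      · have h1 : k ≤ m := by omega
        have h2 : k + 1 ≤ m := by omega
        simp only [if_pos h1, if_pos h2]
        exact hst k h
      · have h1 : k = m := by omega
        subst h1
        have h2 : ¬ (k + 1 ≤ k) := by omega
        simp only [if_pos le_rfl, if_neg h2]
        rw [hconst k le_rfl]
        exact hμHS
  · rintro c hc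
    simp only [HC, Finset.mem_filter] at hc
    obtain ⟨hcb, h0, hconst, hst⟩ := hc
    refine Finset.mem_sigma.mpr ⟨Finset.mem_filter.mpr ⟨(mem_chbx.mp hcb).1 m, ?_⟩, ?_⟩
    · have h1 := hst m (by omega)
      rwa [hconst (m+1) le_rfl] at h1
    · refine Finset.mem_filter.mpr ⟨mem_chbx.mpr ⟨fun k => ?_, fun k hk => ?_⟩, ?_, ?_, ?_⟩
      · by_cases hk : k ≤ m
        · simp only [if_pos hk]; exact (mem_chbx.mp hcb).1 k
        · simp only [if_neg hk]; exact (mem_chbx.mp hcb).1 m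
      · have h1 : ¬ (k ≤ m) := by omega
        have h2 : ¬ (n ≤ m) := by omega
        simp only [if_neg h1, if_neg h2]
      · have h1 : (0:ℕ) ≤ m := by omega
        simp only [if_pos h1]
        exact h0
      · intro k hk
        by_cases h1 : k ≤ m
        · have h2 : k = m := by omega
          subst h2
          simp
        · simp only [if_neg h1]
      · intro k hk
        have h1 : k ≤ m := by omega
        have h2 : k + 1 ≤ m := by omega
        simp only [if_pos h1, if_pos h2]
        exact hst k (by omega)
  · rintro ⟨μ, c⟩ hp
    rw [Finset.mem_sigma] at hp
    obtain ⟨hμ, hc⟩ := hp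
    simp only [HC, Finset.mem_filter] at hc
    obtain ⟨hcb, h0, hconst, hst⟩ := hc
    have h1 : (if m ≤ m then c m else l) = μ := by
      simp only [if_pos le_rfl]
      exact hconst m le_rfl
    simp only [Sigma.mk.inj_iff, heq_eq_eq]
    refine ⟨h1, ?_⟩
    funext k
    by_cases hk : k ≤ m
    · simp only [if_pos hk, if_pos le_rfl]
    · simp only [if_neg hk, if_pos le_rfl]
      exact (hconst m le_rfl).trans (hconst k (by omega)).symm
  · rintro c hc
    simp only [HC, Finset.mem_filter] at hc
    obtain ⟨hcb, h0, hconst, hst⟩ := hc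
    funext k
    by_cases hk : k ≤ m
    · simp only [if_pos hk]
    · simp only [if_neg hk]
      exact (hconst k (by omega)).symm
  · rintro ⟨μ, c⟩ hp
    rw [Finset.mem_sigma] at hp
    obtain ⟨hμ, hc⟩ := hp
    rw [Finset.mem_filter] at hμ
    simp only [HC, Finset.mem_filter] at hc
    obtain ⟨hcb, h0, hconst, hst⟩ := hc
    simp only [wt]
    rw [← Finset.prod_range_mul_prod_Ico _ (show m+1 ≤ n by omega),
        ← Finset.prod_range_mul_prod_Ico
          (f := fun k => y k ^ (sz N ((fun k => if k ≤ m then c k else l) (k+1))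
            - sz N ((fun k => if k ≤ m then c k else l) k))) (show m+1 ≤ n by omega),
        Finset.prod_range_succ, Finset.prod_range_succ]
    have e1 : ∀ k ∈ Finset.range m,
        y k ^ (sz N (if k + 1 ≤ m then c (k+1) else l) - sz N (if k ≤ m then c k else l))
        = y k ^ (sz N (c (k+1)) - sz N (c k)) := by
      intro k hk
      rw [Finset.mem_range] at hk
      have h1 : k ≤ m := by omega
      have h2 : k + 1 ≤ m := by omega
      rw [if_pos h1, if_pos h2]
    have e2 : ∀ k ∈ Finset.Ico (m+1) n,
        y k ^ (sz N (if k + 1 ≤ m then c (k+1) else l) - sz N (if k ≤ m then c k else l))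
        = 1 := by
      intro k hk
      rw [Finset.mem_Ico] at hk
      have h1 : ¬ (k ≤ m) := by omega
      have h2 : ¬ (k + 1 ≤ m) := by omega
      rw [if_neg h1, if_neg h2, Nat.sub_self, pow_zero]
    have e3 : ∀ k ∈ Finset.Ico (m+1) n,
        y k ^ (sz N (c (k+1)) - sz N (c k)) = 1 := by
      intro k hk
      rw [Finset.mem_Ico] at hk
      rw [hconst k (by omega), hconst (k+1) (by omega), Nat.sub_self, pow_zero]
    rw [Finset.prod_congr rfl e1, Finset.prod_congr rfl e2, Finset.prod_congr rfl e3]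
    have h4 : ¬ (m + 1 ≤ m) := by omega
    have h7 : (fun k => if k ≤ m then c k else l) (m+1) = l := by simp [h4]
    have h8 : (fun k => if k ≤ m then c k else l) m = c m := by simp
    rw [h7, h8, hconst m le_rfl, hconst (m+1) (by omega), Nat.sub_self, pow_zero,
      Finset.prod_const_one]
    ring

lemma growth {R : Type*} [CommRing R] {n N : ℕ} (hN : N = n + 2) (x y : ℕ → R) :
    ∀ m, m ≤ n → ∏ j ∈ Finset.range m, ∏ i ∈ Finset.range n, (1 + x i * y j)
      = ∑ μ ∈ bx N, (∑ d ∈ VC n N μ, wt n N x d) * (∑ c ∈ HC n N m μ, wt n N y c) := by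
  intro m
  induction m with
  | zero =>
    intro _
    rw [Finset.prod_range_zero]
    have h1 : ∑ μ ∈ bx N, (∑ d ∈ VC n N μ, wt n N x d) * (∑ c ∈ HC n N 0 μ, wt n N y c)
        = (∑ d ∈ VC n N zfn, wt n N x d) * (∑ c ∈ HC n N 0 zfn, wt n N y c) := by
      refine Finset.sum_eq_single zfn ?_ ?_
      · intro μ hμ hne
        rw [hc_zero, if_neg hne]
        simp
      · intro h
        exact absurd zfn_bx h
    rw [h1, vc_zfn, hc_zero, if_pos rfl, Finset.sum_singleton, Finset.sum_singleton]
    simp [wt, sz_zfn]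
  | succ m ih =>
    intro hm
    rw [Finset.prod_range_succ, ih (by omega), Finset.sum_mul]
    have key : ∀ μ ∈ bx N,
        ((∑ d ∈ VC n N μ, wt n N x d) * (∑ c ∈ HC n N m μ, wt n N y c))
            * (∏ i ∈ Finset.range n, (1 + x i * y m))
        = ∑ l ∈ bx N,
            (if HS μ l then (∑ d ∈ VC n N l, wt n N x d) * y m ^ (sz N l - sz N μ) else 0)
              * (∑ c ∈ HC n N m μ, wt n N y c) := by
      intro μ hμ
      by_cases hne : (HC n N m μ).Nonempty
      · obtain ⟨c, hc⟩ := hne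
        obtain ⟨hbx, hant, hrw, hnice⟩ := hc_props (by omega) hN hc
        have hp := pieri hN hbx hnice hrw x (y m)
        calc ((∑ d ∈ VC n N μ, wt n N x d) * (∑ c ∈ HC n N m μ, wt n N y c))
              * (∏ i ∈ Finset.range n, (1 + x i * y m))
            = ((∑ d ∈ VC n N μ, wt n N x d) * ∏ i ∈ Finset.range n, (1 + x i * y m))
                * (∑ c ∈ HC n N m μ, wt n N y c) := by ring
          _ = (∑ l ∈ (bx N).filter (fun l => HS μ l),
                (∑ d ∈ VC n N l, wt n N x d) * (y m) ^ (sz N l - sz N μ))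
                * (∑ c ∈ HC n N m μ, wt n N y c) := by rw [hp]
          _ = _ := by rw [Finset.sum_filter, Finset.sum_mul]
      · rw [Finset.not_nonempty_iff_eq_empty.mp hne]
        simp
    rw [Finset.sum_congr rfl key, Finset.sum_comm]
    refine Finset.sum_congr rfl (fun l hl => ?_)
    rw [hc_split (by omega) hl y, Finset.mul_sum, Finset.sum_filter]
    refine Finset.sum_congr rfl (fun μ hμ => ?_)
    by_cases h : HS μ l
    · rw [if_pos h, if_pos h]
      ring
    · rw [if_neg h, if_neg h]
      rw [zero_mul]

/-! ### SSYT to chains -/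

lemma mem_pcells {n : ℕ} {f : Fin n → ℕ} {p : Fin n × ℕ} :
    p ∈ pcells f ↔ p.2 < f p.1 := by
  simp only [pcells, Finset.mem_filter, Finset.mem_product, Finset.mem_univ, true_and,
    Finset.mem_range]
  constructor
  · rintro ⟨_, h⟩; exact h
  · intro h
    exact ⟨lt_of_lt_of_le h (Finset.le_sup (Finset.mem_univ p.1)), h⟩

def extf {n : ℕ} (f : Fin n → ℕ) : ℕ → ℕ := fun k => if h : k < n then f ⟨k, h⟩ else 0

def Text {n : ℕ} (f : Fin n → ℕ) (T : {x // x ∈ pcells f} → Fin n) : Fin n × ℕ → ℕ :=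
  fun p => if h : p ∈ pcells f then (T ⟨p, h⟩ : ℕ) else 0

def rowcnt {n : ℕ} (f : Fin n → ℕ) (T : {x // x ∈ pcells f} → Fin n) (k i : ℕ) : ℕ :=
  if h : i < n then
    ((Finset.range (f ⟨i, h⟩)).filter (fun j => Text f T (⟨i, h⟩, j) < k)).card
  else 0

lemma downclosed_eq_range {s : Finset ℕ} (hdc : ∀ j ∈ s, ∀ j', j' ≤ j → j' ∈ s) :
    s = Finset.range s.card := by
  have h1 : ∀ j, j ∈ s ↔ j < s.card := by
    intro j
    constructor
    · intro hj
      by_contra h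
      push_neg at h
      have hsub : Finset.range (j+1) ⊆ s := by
        intro j' hj'
        exact hdc j hj j' (by simp only [Finset.mem_range] at hj'; omega)
      have := Finset.card_le_card hsub
      simp only [Finset.card_range] at this
      omega
    · intro hj
      by_contra h
      have hsub : s ⊆ Finset.range j := by
        intro j' hj'
        rw [Finset.mem_range]
        by_contra h2
        exact h (hdc j' hj' j (by omega))
      have := Finset.card_le_card hsub
      simp only [Finset.card_range] at this
      omega
  ext j
  rw [Finset.mem_range]
  exact h1 j

lemma le_of_forall_lt_imp {a b : ℕ} (h : ∀ j, j < a → j < b) : a ≤ b := by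
  rcases Nat.eq_zero_or_pos a with h0 | h0
  · omega
  · have := h (a-1) (by omega)
    omega

section SSYTChains

variable {n : ℕ} {f : Fin n → ℕ} {T : {x // x ∈ pcells f} → Fin n}

lemma rowcnt_mem (hssyt : IsSSYT f T) {k i : ℕ} (hi : i < n) {j : ℕ} :
    j < rowcnt f T k i ↔ j < f ⟨i, hi⟩ ∧ Text f T (⟨i, hi⟩, j) < k := by
  have hdc : ∀ j ∈ (Finset.range (f ⟨i, hi⟩)).filter (fun j => Text f T (⟨i, hi⟩, j) < k),
      ∀ j', j' ≤ j → j' ∈ (Finset.range (f ⟨i, hi⟩)).filter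
        (fun j => Text f T (⟨i, hi⟩, j) < k) := by
    intro j hj j' hj'
    rw [Finset.mem_filter, Finset.mem_range] at hj ⊢
    obtain ⟨hj1, hj2⟩ := hj
    have hm : ((⟨i, hi⟩, j) : Fin n × ℕ) ∈ pcells f := mem_pcells.mpr hj1
    have hm' : ((⟨i, hi⟩, j') : Fin n × ℕ) ∈ pcells f := mem_pcells.mpr (show j' < f ⟨i, hi⟩ by omega)
    have hrow := hssyt.1 ⟨_, hm'⟩ ⟨_, hm⟩ rfl hj'
    simp only [Text, dif_pos hm, dif_pos hm'] at hj2 ⊢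
    exact ⟨by omega, lt_of_le_of_lt (by exact_mod_cast hrow) hj2⟩
  have hr : (Finset.range (f ⟨i, hi⟩)).filter (fun j => Text f T (⟨i, hi⟩, j) < k)
      = Finset.range (rowcnt f T k i) := by
    rw [rowcnt, dif_pos hi]
    exact downclosed_eq_range hdc
  constructor
  · intro hj
    have : j ∈ (Finset.range (f ⟨i, hi⟩)).filter (fun j => Text f T (⟨i, hi⟩, j) < k) := by
      rw [hr, Finset.mem_range]; exact hj
    rw [Finset.mem_filter, Finset.mem_range] at this
    exact this
  · intro ⟨h1, h2⟩
    have : j ∈ (Finset.range (f ⟨i, hi⟩)).filter (fun j => Text f T (⟨i, hi⟩, j) < k) := by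
      rw [Finset.mem_filter, Finset.mem_range]; exact ⟨h1, h2⟩
    rw [hr, Finset.mem_range] at this
    exact this

end SSYTChains

section SSYTChains2

variable {n : ℕ} {f : Fin n → ℕ} {T : {x // x ∈ pcells f} → Fin n}

lemma Text_lt_n {p : Fin n × ℕ} (hp : p ∈ pcells f) : Text f T p < n := by
  rw [Text, dif_pos hp]
  exact (T ⟨p, hp⟩).isLt

lemma rowcnt_zero (i : ℕ) : rowcnt f T 0 i = 0 := by
  rw [rowcnt]
  split
  · convert Finset.card_empty
    rw [Finset.filter_eq_empty_iff]
    intro j _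
    omega
  · rfl

lemma rowcnt_top {k : ℕ} (hk : n ≤ k) (i : ℕ) : rowcnt f T k i = extf f i := by
  rw [rowcnt, extf]
  split
  case isTrue h =>
    rw [Finset.filter_true_of_mem, Finset.card_range]
    intro j hj
    rw [Finset.mem_range] at hj
    have hp : ((⟨i, h⟩, j) : Fin n × ℕ) ∈ pcells f := mem_pcells.mpr hj
    have := Text_lt_n (T := T) hp
    omega
  case isFalse h => rfl

lemma rowcnt_le (k i : ℕ) : rowcnt f T k i ≤ extf f i := by
  rw [rowcnt, extf]
  split
  · calc _ ≤ (Finset.range (f _)).card := Finset.card_le_card (Finset.filter_subset _ _)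
    _ = _ := Finset.card_range _
  · exact le_rfl

lemma rowcnt_mono {k k' : ℕ} (hk : k ≤ k') (i : ℕ) : rowcnt f T k i ≤ rowcnt f T k' i := by
  rw [rowcnt, rowcnt]
  split
  · refine Finset.card_le_card (Finset.monotone_filter_right _ ?_)
    exact fun j hj => by omega
  · exact le_rfl

lemma rowcnt_HS (hssyt : IsSSYT f T) (hant : ∀ i j : Fin n, i ≤ j → f j ≤ f i) (k : ℕ) :
    HS (rowcnt f T k) (rowcnt f T (k+1)) := by
  refine ⟨rowcnt_mono (by omega), fun i => ?_⟩
  refine le_of_forall_lt_imp (fun j hj => ?_)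
  by_cases hi1 : i + 1 < n
  · rw [rowcnt_mem hssyt hi1] at hj
    obtain ⟨hj1, hj2⟩ := hj
    have hi : i < n := by omega
    have hfle : f ⟨i, hi⟩ ≥ f ⟨i+1, hi1⟩ := hant ⟨i, hi⟩ ⟨i+1, hi1⟩ (by
      simp only [Fin.mk_le_mk]; omega)
    have hcell : ((⟨i, hi⟩, j) : Fin n × ℕ) ∈ pcells f := mem_pcells.mpr (by
      show j < f ⟨i, hi⟩; omega)
    have hcell1 : ((⟨i+1, hi1⟩, j) : Fin n × ℕ) ∈ pcells f := mem_pcells.mpr hj1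
    have hcol := hssyt.2 ⟨_, hcell⟩ ⟨_, hcell1⟩ rfl (by
      simp only [Fin.mk_lt_mk]; omega)
    rw [rowcnt_mem hssyt hi]
    refine ⟨by omega, ?_⟩
    have e1 : Text f T (⟨i, hi⟩, j) = (T ⟨_, hcell⟩ : ℕ) := by rw [Text, dif_pos hcell]
    have e2 : Text f T (⟨i+1, hi1⟩, j) = (T ⟨_, hcell1⟩ : ℕ) := by rw [Text, dif_pos hcell1]
    rw [e1]
    rw [e2] at hj2
    have : (T ⟨_, hcell⟩ : ℕ) < (T ⟨_, hcell1⟩ : ℕ) := hcol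
    omega
  · rw [rowcnt, dif_neg hi1] at hj
    omega

/-- the value of the tableau associated to a chain -/
def tval (n : ℕ) (c : ℕ → ℕ → ℕ) (i j : ℕ) : ℕ :=
  ((Finset.range n).filter (fun k => c (k+1) i ≤ j)).card

def TofC (c : ℕ → ℕ → ℕ) : {x // x ∈ pcells f} → Fin n :=
  fun p => if h : tval n c p.val.1 p.val.2 < n then ⟨_, h⟩ else p.val.1

section Backward

variable {N : ℕ} {c : ℕ → ℕ → ℕ}

/-- chain facts -/
structure ChainF (n : ℕ) (f : Fin n → ℕ) (c : ℕ → ℕ → ℕ) : Prop where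
  h0 : c 0 = zfn
  hst : ∀ k, k < n → HS (c k) (c (k+1))
  htop : ∀ k, n ≤ k → c k = extf f

lemma ChainF.mono (hc : ChainF n f c) {k k' : ℕ} (hk : k ≤ k') (i : ℕ) : c k i ≤ c k' i := by
  rcases le_or_gt k' n with h | h
  · exact le_chain hk (fun k'' _ hk2 j => (hc.hst k'' (by omega)).1 j) i
  · rcases le_or_gt k n with h2 | h2
    · calc c k i ≤ c n i := le_chain h2 (fun k'' _ hk2 j => (hc.hst k'' (by omega)).1 j) i
      _ = c k' i := by rw [hc.htop n le_rfl, hc.htop k' (by omega)]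
    · rw [hc.htop k (by omega), hc.htop k' (by omega)]
  
lemma ChainF.le_f (hc : ChainF n f c) (k i : ℕ) : c k i ≤ extf f i := by
  calc c k i ≤ c (max k n) i := hc.mono (by omega) i
  _ = extf f i := by rw [hc.htop _ (by omega)]

lemma tval_lt_iff (hc : ChainF n f c) {i j : ℕ} (hi : i < n) (hj : j < f ⟨i, hi⟩) (k : ℕ) :
    tval n c i j < k ↔ j < c k i := by
  have hdc : ((Finset.range n).filter (fun k => c (k+1) i ≤ j))
      = Finset.range (tval n c i j) := by
    refine downclosed_eq_range ?_
    intro a ha a' ha'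
    rw [Finset.mem_filter, Finset.mem_range] at ha ⊢
    exact ⟨by omega, le_trans (hc.mono (by omega) i) ha.2⟩
  have hmem : ∀ a, a ∈ (Finset.range n).filter (fun k => c (k+1) i ≤ j)
      ↔ a < tval n c i j := by
    intro a
    rw [hdc, Finset.mem_range]
  have htn : tval n c i j < n := by
    by_contra hcon
    push_neg at hcon
    have hnpos : 0 < n := by omega
    have h2 : n - 1 < tval n c i j := by omega
    have h5 := (hmem (n-1)).mpr h2
    rw [Finset.mem_filter] at h5
    have h4 : n - 1 + 1 = n := by omega
    rw [h4] at h5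
    have h6 := h5.2
    rw [hc.htop n le_rfl] at h6
    simp only [extf, dif_pos hi] at h6
    omega
  constructor
  · intro hk
    have h1 : ¬ (c (tval n c i j + 1) i ≤ j) := by
      intro h2
      have := (hmem (tval n c i j)).mp (by
        rw [Finset.mem_filter, Finset.mem_range]
        exact ⟨htn, h2⟩)
      omega
    have h2 : j < c (tval n c i j + 1) i := by omega
    exact lt_of_lt_of_le h2 (hc.mono (by omega) i)
  · intro hjk
    by_contra h
    push_neg at h
    have h1 : c (tval n c i j) i ≤ j := by
      rcases Nat.eq_zero_or_pos (tval n c i j) with h2 | h2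
      · rw [h2, hc.h0]; exact Nat.zero_le _
      · have := (hmem (tval n c i j - 1)).mpr (by omega)
        rw [Finset.mem_filter] at this
        have h3 : tval n c i j - 1 + 1 = tval n c i j := by omega
        rw [h3] at this
        exact this.2
    have := hc.mono h i
    omega

lemma tval_lt_n (hc : ChainF n f c) {i j : ℕ} (hi : i < n) (hj : j < f ⟨i, hi⟩) :
    tval n c i j < n := by
  rw [tval_lt_iff hc hi hj n, hc.htop n le_rfl, extf, dif_pos hi]
  exact hj

end Backward

end SSYTChains2

section SSYTChains3

variable {n : ℕ} {f : Fin n → ℕ} {T : {x // x ∈ pcells f} → Fin n} {c : ℕ → ℕ → ℕ}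

lemma tval_lt_n' (hc : ChainF n f c) (p : {x // x ∈ pcells f}) :
    tval n c p.val.1 p.val.2 < n := by
  have hj := mem_pcells.mp p.prop
  exact tval_lt_n hc p.val.1.isLt (by simpa using hj)

lemma TofC_eq (hc : ChainF n f c) (p : {x // x ∈ pcells f}) :
    (TofC c p : ℕ) = tval n c p.val.1 p.val.2 := by
  rw [TofC, dif_pos (tval_lt_n' hc p)]

lemma tval_mono_j {i j j' : ℕ} (h : j ≤ j') : tval n c i j ≤ tval n c i j' := by
  refine Finset.card_le_card (Finset.monotone_filter_right _ ?_)
  exact fun k hk => by omega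

lemma tval_col (hc : ChainF n f c) (hant : ∀ i j : Fin n, i ≤ j → f j ≤ f i)
    {i j : ℕ} (hi1 : i + 1 < n) (hj : j < f ⟨i+1, hi1⟩) :
    tval n c i j < tval n c (i+1) j := by
  have ht'n : tval n c (i+1) j < n := tval_lt_n hc hi1 hj
  have h1 : j < c (tval n c (i+1) j + 1) (i+1) :=
    (tval_lt_iff hc hi1 hj (tval n c (i+1) j + 1)).mp (by omega)
  have h2 : c (tval n c (i+1) j + 1) (i+1) ≤ c (tval n c (i+1) j) i :=
    (hc.hst _ ht'n).2 i
  have hi : i < n := by omega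
  have hj' : j < f ⟨i, hi⟩ := lt_of_lt_of_le hj (hant ⟨i, hi⟩ ⟨i+1, hi1⟩ (by
    simp only [Fin.mk_le_mk]; omega))
  exact (tval_lt_iff hc hi hj' _).mpr (by omega)

lemma tval_col_gen (hc : ChainF n f c) (hant : ∀ i j : Fin n, i ≤ j → f j ≤ f i) :
    ∀ d i j, 0 < d → ∀ (h : i + d < n), j < f ⟨i+d, h⟩ →
      tval n c i j < tval n c (i+d) j := by
  intro d
  induction d with
  | zero => intro i j h0; omega
  | succ d ih =>
    intro i j _ h hj
    rcases Nat.eq_zero_or_pos d with hd | hd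
    · subst hd
      exact tval_col hc hant h hj
    · have hid : i + d < n := by omega
      have hjd : j < f ⟨i+d, hid⟩ := lt_of_lt_of_le hj (hant ⟨i+d, hid⟩ ⟨i+d+1, by omega⟩ (by
        simp only [Fin.mk_le_mk]; omega))
      have h1 := ih i j hd hid hjd
      have h2 : tval n c (i+d) j < tval n c (i+d+1) j :=
        tval_col hc hant (i := i + d) (by omega) (by exact hj)
      show tval n c i j < tval n c (i + d + 1) j
      omega

lemma TofC_isSSYT (hc : ChainF n f c) (hant : ∀ i j : Fin n, i ≤ j → f j ≤ f i) :
    IsSSYT f (TofC c) := by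
  constructor
  · intro p q hpq hj
    have e1 := TofC_eq hc p
    have e2 := TofC_eq hc q
    have h1 : tval n c p.val.1 p.val.2 ≤ tval n c q.val.1 q.val.2 := by
      rw [hpq]
      exact tval_mono_j hj
    rw [Fin.le_def, e1, e2]
    exact h1
  · intro p q hpq hlt
    have e1 := TofC_eq hc p
    have e2 := TofC_eq hc q
    rw [Fin.lt_def, e1, e2]
    have hd : (q.val.1 : ℕ) = (p.val.1 : ℕ) + ((q.val.1 : ℕ) - (p.val.1 : ℕ)) := by
      have : (p.val.1 : ℕ) < (q.val.1 : ℕ) := hlt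
      omega
    have hj := mem_pcells.mp q.prop
    have hq : (q.val.1 : ℕ) < n := q.val.1.isLt
    have key := tval_col_gen hc hant ((q.val.1 : ℕ) - (p.val.1 : ℕ)) (p.val.1 : ℕ)
      q.val.2 (by have : (p.val.1 : ℕ) < (q.val.1 : ℕ) := hlt; omega)
      (by omega) (by
        have : f ⟨(p.val.1 : ℕ) + ((q.val.1 : ℕ) - (p.val.1 : ℕ)), by omega⟩ = f q.val.1 := by
          congr 1
          ext
          simp only
          omega
        rw [this]
        exact hj)
    rw [← hd] at key
    rw [hpq]
    exact key

lemma chainF_of_HC {N : ℕ} (hc : c ∈ HC n N n (extf f)) : ChainF n f c := by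
  simp only [HC, Finset.mem_filter] at hc
  obtain ⟨hcb, h0, hconst, hst⟩ := hc
  exact ⟨h0, fun k hk => hst k hk, fun k hk => hconst k hk⟩

lemma chainF_rowcnt (hssyt : IsSSYT f T) (hant : ∀ i j : Fin n, i ≤ j → f j ≤ f i) :
    ChainF n f (fun k => rowcnt f T k) :=
  ⟨funext (fun i => rowcnt_zero i), fun k _ => rowcnt_HS hssyt hant k,
    fun k hk => funext (fun i => rowcnt_top hk i)⟩

lemma rowcnt_TofC (hc : ChainF n f c) : (fun k => rowcnt f (TofC c) k) = c := by
  funext k i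
  by_cases hi : i < n
  · have hchar : ∀ j, j < f ⟨i, hi⟩ → (Text f (TofC c) (⟨i, hi⟩, j) < k ↔ j < c k i) := by
      intro j hj
      have hp : ((⟨i, hi⟩, j) : Fin n × ℕ) ∈ pcells f := mem_pcells.mpr hj
      rw [Text, dif_pos hp, TofC_eq hc ⟨_, hp⟩]
      exact tval_lt_iff hc hi hj k
    rw [rowcnt, dif_pos hi]
    have hle : c k i ≤ f ⟨i, hi⟩ := by
      have := hc.le_f k i
      simpa [extf, dif_pos hi] using this
    have : (Finset.range (f ⟨i, hi⟩)).filter (fun j => Text f (TofC c) (⟨i, hi⟩, j) < k)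
        = Finset.range (c k i) := by
      ext j
      simp only [Finset.mem_filter, Finset.mem_range]
      constructor
      · rintro ⟨h1, h2⟩
        exact (hchar j h1).mp h2
      · intro h1
        have hjf : j < f ⟨i, hi⟩ := by omega
        exact ⟨hjf, (hchar j hjf).mpr h1⟩
    rw [this, Finset.card_range]
  · rw [rowcnt, dif_neg hi]
    have := hc.le_f k i
    simp only [extf, dif_neg hi] at this
    omega

lemma TofC_rowcnt (hssyt : IsSSYT f T) (hant : ∀ i j : Fin n, i ≤ j → f j ≤ f i) :
    TofC (fun k => rowcnt f T k) = T := by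
  have hc := chainF_rowcnt hssyt hant
  funext p
  have e1 := TofC_eq hc p
  refine Fin.ext ?_
  rw [e1]
  have hi : (p.val.1 : ℕ) < n := p.val.1.isLt
  have hj : p.val.2 < f p.val.1 := mem_pcells.mp p.prop
  have hTn : (T p : ℕ) < n := (T p).isLt
  have hTe : Text f T (⟨(p.val.1 : ℕ), hi⟩, p.val.2) = (T p : ℕ) := by
    have hp : ((⟨(p.val.1 : ℕ), hi⟩, p.val.2) : Fin n × ℕ) ∈ pcells f := by
      rw [mem_pcells]
      simpa using hj
    rw [Text, dif_pos hp]
  have hset : (Finset.range n).filter (fun k => rowcnt f T (k+1) (p.val.1 : ℕ) ≤ p.val.2)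
      = Finset.range (T p : ℕ) := by
    ext a
    simp only [Finset.mem_filter, Finset.mem_range]
    constructor
    · rintro ⟨h1, h2⟩
      by_contra h3
      push_neg at h3
      have : p.val.2 < rowcnt f T (a+1) (p.val.1 : ℕ) := by
        rw [rowcnt_mem hssyt hi]
        constructor
        · simpa using hj
        · rw [hTe]; omega
      omega
    · intro h1
      refine ⟨by omega, ?_⟩
      by_contra h2
      push_neg at h2
      rw [rowcnt_mem hssyt hi] at h2
      rw [hTe] at h2
      omega
  rw [tval, hset, Finset.card_range]

end SSYTChains3

def xvar (n : ℕ) : ℕ → MvPolynomial (Fin n) ℤ :=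
  fun k => if h : k < n then MvPolynomial.X ⟨k, h⟩ else 1

lemma sum_sub_nat {s : Finset ℕ} {a b : ℕ → ℕ} (h : ∀ i ∈ s, b i ≤ a i) :
    ∑ i ∈ s, (a i - b i) = ∑ i ∈ s, a i - ∑ i ∈ s, b i := by
  have h1 : ∑ i ∈ s, (a i - b i) + ∑ i ∈ s, b i = ∑ i ∈ s, a i := by
    rw [← Finset.sum_add_distrib]
    exact Finset.sum_congr rfl (fun i hi => by have := h i hi; omega)
  omega

lemma pcells_eq {n : ℕ} (f : Fin n → ℕ) :
    pcells f = (Finset.univ : Finset (Fin n)).biUnion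
      (fun i => (Finset.range (f i)).image (fun j => (i, j))) := by
  ext p
  rw [mem_pcells, Finset.mem_biUnion]
  constructor
  · intro h
    exact ⟨p.1, Finset.mem_univ _, Finset.mem_image.mpr ⟨p.2, Finset.mem_range.mpr h, rfl⟩⟩
  · rintro ⟨i, _, hp⟩
    rw [Finset.mem_image] at hp
    obtain ⟨j, hj, rfl⟩ := hp
    rw [Finset.mem_range] at hj
    exact hj

section Weight

variable {n N : ℕ} {f : Fin n → ℕ} {T : {x // x ∈ pcells f} → Fin n}

lemma sz_rowcnt (hN : N = n + 2) (k : ℕ) :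
    sz N (rowcnt f T k) = ∑ i ∈ Finset.range n, rowcnt f T k i := by
  rw [sz]
  refine (Finset.sum_subset (Finset.range_subset_range.mpr (by omega)) ?_).symm
  intro i _ hi
  rw [Finset.mem_range, not_lt] at hi
  rw [rowcnt, dif_neg (by omega)]

lemma fiber_card (hssyt : IsSSYT f T) (hN : N = n + 2) (k : Fin n) :
    (Finset.univ.filter (fun p : {x // x ∈ pcells f} => T p = k)).card
      = sz N (rowcnt f T (k+1)) - sz N (rowcnt f T k) := by
  rw [sz_rowcnt hN, sz_rowcnt hN]
  rw [Finset.card_filter]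
  have h1 : ∀ p : {x // x ∈ pcells f},
      (if T p = k then (1:ℕ) else 0) = (if Text f T p.val = (k:ℕ) then 1 else 0) := by
    intro p
    have he : Text f T p.val = (T p : ℕ) := by
      rw [Text, dif_pos p.prop]
    rw [he]
    by_cases h : T p = k
    · rw [if_pos h, if_pos (by rw [h])]
    · rw [if_neg h, if_neg (fun hc => h (Fin.ext hc))]
  rw [Finset.sum_congr rfl (fun p _ => h1 p)]
  rw [Finset.univ_eq_attach, Finset.sum_attach (pcells f)
    (fun q => if Text f T q = (k:ℕ) then (1:ℕ) else 0)]
  rw [← Finset.card_filter]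
  have h2 : (pcells f).filter (fun q => Text f T q = (k:ℕ))
      = (Finset.univ : Finset (Fin n)).biUnion
        (fun i => ((Finset.range (f i)).filter
          (fun j => Text f T (i, j) = (k:ℕ))).image (fun j => (i, j))) := by
    rw [pcells_eq f, Finset.filter_biUnion]
    congr 1
    funext i
    ext q
    constructor
    · intro hq
      rw [Finset.mem_filter] at hq
      obtain ⟨hq1, hq2⟩ := hq
      rw [Finset.mem_image] at hq1
      obtain ⟨j, hj, rfl⟩ := hq1
      exact Finset.mem_image.mpr ⟨j, Finset.mem_filter.mpr ⟨hj, hq2⟩, rfl⟩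
    · intro hq
      rw [Finset.mem_image] at hq
      obtain ⟨j, hj, rfl⟩ := hq
      rw [Finset.mem_filter] at hj
      exact Finset.mem_filter.mpr ⟨Finset.mem_image.mpr ⟨j, hj.1, rfl⟩, hj.2⟩
  rw [h2, Finset.card_biUnion]
  · have h3 : ∀ i : Fin n,
        (((Finset.range (f i)).filter (fun j => Text f T (i, j) = (k:ℕ))).image
          (fun j => (i, j))).card
        = rowcnt f T (k+1) (i:ℕ) - rowcnt f T k (i:ℕ) := by
      intro i
      rw [Finset.card_image_of_injective _ (fun a b hab => by
        simpa using congrArg Prod.snd hab)]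
      have hsub : (Finset.range (f i)).filter (fun j => Text f T (i, j) < (k:ℕ))
          ⊆ (Finset.range (f i)).filter (fun j => Text f T (i, j) < (k:ℕ)+1) :=
        Finset.monotone_filter_right _ (fun j hj => by omega)
      have hdiff : (Finset.range (f i)).filter (fun j => Text f T (i, j) = (k:ℕ))
          = ((Finset.range (f i)).filter (fun j => Text f T (i, j) < (k:ℕ)+1))
            \ ((Finset.range (f i)).filter (fun j => Text f T (i, j) < (k:ℕ))) := by
        ext j
        simp only [Finset.mem_sdiff, Finset.mem_filter, Finset.mem_range]
        constructor
        · rintro ⟨hj1, hj2⟩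
          exact ⟨⟨hj1, by omega⟩, fun hc => by omega⟩
        · rintro ⟨⟨hj1, hj2⟩, hj3⟩
          refine ⟨hj1, ?_⟩
          by_contra hc
          exact hj3 ⟨hj1, by omega⟩
      rw [hdiff, Finset.card_sdiff_of_subset hsub]
      have hr1 : rowcnt f T ((k:ℕ)+1) (i:ℕ)
          = ((Finset.range (f i)).filter (fun j => Text f T (i, j) < (k:ℕ)+1)).card := by
        rw [rowcnt, dif_pos i.isLt]
      have hr2 : rowcnt f T (k:ℕ) (i:ℕ)
          = ((Finset.range (f i)).filter (fun j => Text f T (i, j) < (k:ℕ))).card := by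
        rw [rowcnt, dif_pos i.isLt]
      rw [hr1, hr2]
    rw [Finset.sum_congr rfl (fun i _ => h3 i)]
    rw [← sum_sub_nat (fun i _ => rowcnt_mono (by omega) i)]
    exact (Finset.sum_range (fun i => rowcnt f T ((k:ℕ)+1) i - rowcnt f T (k:ℕ) i)).symm ▸
      (Fin.sum_univ_eq_sum_range (fun i => rowcnt f T ((k:ℕ)+1) i - rowcnt f T (k:ℕ) i) n)
  · intro a _ b _ hab
    intro s hsa hsb p hp
    have h4 := hsa hp
    have h5 := hsb hp
    rw [Finset.mem_image] at h4 h5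
    obtain ⟨j1, _, rfl⟩ := h4
    obtain ⟨j2, _, he⟩ := h5
    exact absurd (congrArg Prod.fst he).symm (by simpa using hab)

lemma weight_eq (hssyt : IsSSYT f T) (hN : N = n + 2) :
    ∏ p : {x // x ∈ pcells f}, MvPolynomial.X (T p)
      = wt n N (xvar n) (fun k => rowcnt f T k) := by
  have h1 : ∏ p : {x // x ∈ pcells f}, MvPolynomial.X (T p)
      = ∏ k : Fin n, ∏ p ∈ Finset.univ.filter (fun p : {x // x ∈ pcells f} => T p = k),
          (MvPolynomial.X (T p) : MvPolynomial (Fin n) ℤ) :=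
    (Finset.prod_fiberwise_of_maps_to (fun p _ => Finset.mem_univ (T p)) _).symm
  rw [h1]
  have h2 : ∀ k : Fin n, ∏ p ∈ Finset.univ.filter
        (fun p : {x // x ∈ pcells f} => T p = k),
        (MvPolynomial.X (T p) : MvPolynomial (Fin n) ℤ)
      = MvPolynomial.X k ^ (sz N (rowcnt f T ((k:ℕ)+1)) - sz N (rowcnt f T (k:ℕ))) := by
    intro k
    rw [← fiber_card hssyt hN k]
    rw [Finset.prod_congr rfl (fun p hp => by
      rw [(Finset.mem_filter.mp hp).2]), Finset.prod_const]
  rw [Finset.prod_congr rfl (fun k _ => h2 k), wt]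
  rw [← Fin.prod_univ_eq_prod_range
    (fun k => xvar n k ^ (sz N (rowcnt f T (k+1)) - sz N (rowcnt f T k))) n]
  refine Finset.prod_congr rfl (fun k _ => ?_)
  rw [xvar, dif_pos k.isLt]

end Weight

lemma schur_eq_chains {n N : ℕ} (hN : N = n + 2) (f : Fin n → ℕ)
    (hant : ∀ i j : Fin n, i ≤ j → f j ≤ f i) (hval : ∀ i, f i ≤ n) :
    schurPoly f n = ∑ c ∈ HC n N n (extf f), wt n N (xvar n) c := by
  rw [schurPoly]
  refine Finset.sum_nbij' (fun T => (fun k => rowcnt f T k)) (fun c => TofC c) ?_ ?_ ?_ ?_ ?_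
  · intro T hT
    have hssyt : IsSSYT f T := (Finset.mem_filter.mp hT).2
    refine Finset.mem_filter.mpr ⟨?_, funext (fun i => rowcnt_zero i),
      fun k hk => funext (fun i => rowcnt_top hk i), fun k _ => rowcnt_HS hssyt hant k⟩
    refine mem_chbx.mpr ⟨fun k => ?_, fun k hk => ?_⟩
    · refine mem_bx.mpr ⟨fun i => ?_, fun i hi => ?_⟩
      · show rowcnt f T k i ≤ N
        calc rowcnt f T k i ≤ extf f i := rowcnt_le k i
        _ ≤ n := by
            rw [extf]
            split
            · exact hval _
            · omega
        _ ≤ N := by omega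
      · show rowcnt f T k i = 0
        have := rowcnt_le (f := f) (T := T) k i
        rw [extf, dif_neg (show ¬ i < n by omega)] at this
        omega
    · show rowcnt f T k = rowcnt f T n
      rw [funext (fun i => rowcnt_top (T := T) hk i),
        funext (fun i => rowcnt_top (T := T) (le_refl n) i)]
  · intro c hc
    have hcf := chainF_of_HC hc
    exact Finset.mem_filter.mpr ⟨Finset.mem_univ _, TofC_isSSYT hcf hant⟩
  · intro T hT
    exact TofC_rowcnt (Finset.mem_filter.mp hT).2 hant
  · intro c hc
    exact rowcnt_TofC (chainF_of_HC hc)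
  · intro T hT
    exact weight_eq (Finset.mem_filter.mp hT).2 hN

/-! ### Conjugation -/

def conj (N : ℕ) (g : ℕ → ℕ) : ℕ → ℕ :=
  fun k => ((Finset.range N).filter (fun i => k < g i)).card

section Conj

variable {N : ℕ} {g h : ℕ → ℕ}

lemma conj_char (hant : Antit g) (hrows : ∀ i, N ≤ i → g i = 0) :
    ∀ k k', k' < conj N g k ↔ k < g k' := by
  intro k k'
  have hdc : ∀ a ∈ (Finset.range N).filter (fun i => k < g i), ∀ a', a' ≤ a →
      a' ∈ (Finset.range N).filter (fun i => k < g i) := by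
    intro a ha a' ha'
    rw [Finset.mem_filter, Finset.mem_range] at ha ⊢
    exact ⟨by omega, lt_of_lt_of_le ha.2 (hant a' a ha')⟩
  have hr := downclosed_eq_range hdc
  constructor
  · intro hk
    have : k' ∈ (Finset.range N).filter (fun i => k < g i) := by
      rw [hr, Finset.mem_range]
      exact hk
    exact (Finset.mem_filter.mp this).2
  · intro hk
    have hkN : k' < N := by
      by_contra hc
      have := hrows k' (by omega)
      omega
    have : k' ∈ (Finset.range N).filter (fun i => k < g i) :=
      Finset.mem_filter.mpr ⟨Finset.mem_range.mpr hkN, hk⟩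
    rw [hr, Finset.mem_range] at this
    exact this

lemma conj_antit : Antit (conj N g) := by
  refine antit_of_step (fun k => ?_)
  refine Finset.card_le_card (Finset.monotone_filter_right _ ?_)
  exact fun i hi => by omega

lemma conj_rows (hval : ∀ i, g i ≤ N) : ∀ k, N ≤ k → conj N g k = 0 := by
  intro k hk
  rw [conj]
  convert Finset.card_empty
  rw [Finset.filter_eq_empty_iff]
  intro i _
  have := hval i
  omega

lemma conj_le (hle : ∀ i, g i ≤ h i) (k : ℕ) : conj N g k ≤ conj N h k := by
  refine Finset.card_le_card (Finset.monotone_filter_right _ ?_)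
  exact fun i hi => by have := hle i; omega

lemma conj_val_le (k : ℕ) : conj N g k ≤ N := by
  calc conj N g k ≤ (Finset.range N).card := Finset.card_le_card (Finset.filter_subset _ _)
  _ = N := Finset.card_range N

lemma conj_conj (hant : Antit g) (hval : ∀ i, g i ≤ N) (hrows : ∀ i, N ≤ i → g i = 0) :
    conj N (conj N g) = g := by
  funext k
  have hc1 := conj_char hant hrows
  have hc2 := conj_char (conj_antit (g := g) (N := N)) (conj_rows hval)
  have key : ∀ k', k' < conj N (conj N g) k ↔ k' < g k := by
    intro k'
    rw [hc2 k k', hc1 k' k]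
  have h1 := le_of_forall_lt_imp (fun j hj => (key j).mp hj)
  have h2 := le_of_forall_lt_imp (fun j hj => (key j).mpr hj)
  omega

lemma conj_zfn : conj N zfn = zfn := by
  funext k
  rw [conj, zfn]
  convert Finset.card_empty
  rw [Finset.filter_eq_empty_iff]
  intro i _
  simp [zfn]

lemma sz_conj (hval : ∀ i, g i ≤ N) : sz N (conj N g) = sz N g := by
  rw [sz, sz]
  have h1 : ∀ k, conj N g k = ∑ i ∈ Finset.range N, if k < g i then 1 else 0 := by
    intro k
    rw [conj, Finset.card_filter]
  rw [Finset.sum_congr rfl (fun k _ => h1 k), Finset.sum_comm]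
  refine Finset.sum_congr rfl (fun i _ => ?_)
  have h2 : (Finset.range N).filter (fun k => k < g i) = Finset.range (g i) := by
    ext k
    simp only [Finset.mem_filter, Finset.mem_range]
    have := hval i
    omega
  calc ∑ k ∈ Finset.range N, (if k < g i then (1:ℕ) else 0)
      = ((Finset.range N).filter (fun k => k < g i)).card := (Finset.card_filter _ _).symm
  _ = g i := by rw [h2, Finset.card_range]

lemma conj_HS_VS (hga : Antit g) (hgr : ∀ i, N ≤ i → g i = 0)
    (hha : Antit h) (hhr : ∀ i, N ≤ i → h i = 0) (hhs : HS g h) :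
    VS (conj N g) (conj N h) := by
  refine ⟨fun k => conj_le hhs.1 k, fun k => ?_⟩
  refine le_of_forall_lt_imp (fun k' hk' => ?_)
  rw [conj_char hha hhr] at hk'
  rcases Nat.eq_zero_or_pos k' with h0 | h0
  · omega
  · obtain ⟨k'', rfl⟩ : ∃ k'', k' = k'' + 1 := ⟨k' - 1, by omega⟩
    have h1 := hhs.2 k''
    have h2 : k < g k'' := by omega
    rw [← conj_char hga hgr] at h2
    omega

lemma conj_VS_HS (hga : Antit g) (hgr : ∀ i, N ≤ i → g i = 0)
    (hha : Antit h) (hhr : ∀ i, N ≤ i → h i = 0) (hvs : VS g h) :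
    HS (conj N g) (conj N h) := by
  refine ⟨fun k => conj_le hvs.1 k, fun k => ?_⟩
  refine le_of_forall_lt_imp (fun k' hk' => ?_)
  rw [conj_char hha hhr] at hk'
  have h1 := hvs.2 k'
  have h2 : k < g k' := by omega
  rw [← conj_char hga hgr] at h2
  exact h2

end Conj

lemma hc_elem_antit {n N m : ℕ} {μ : ℕ → ℕ} {c : ℕ → ℕ → ℕ} (hc : c ∈ HC n N m μ) :
    ∀ k, Antit (c k) := by
  simp only [HC, Finset.mem_filter] at hc
  obtain ⟨hcb, h0, hconst, hst⟩ := hc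
  have key : ∀ k, k ≤ m → Antit (c k) := by
    intro k hk
    rcases Nat.eq_zero_or_pos k with h | h
    · subst h
      rw [h0]
      exact fun _ _ _ => le_rfl
    · obtain ⟨k', rfl⟩ : ∃ k'', k = k'' + 1 := ⟨k - 1, by omega⟩
      refine antit_of_step (fun i => ?_)
      have h1 := (hst k' (by omega)).2 i
      have h2 := (hst k' (by omega)).1 i
      omega
  intro k
  rcases le_or_gt k m with h | h
  · exact key k h
  · rw [hconst k (by omega), ← hconst m le_rfl]
    exact key m le_rfl

lemma conj_le_n {N n : ℕ} {μ : ℕ → ℕ} (hrows : ∀ i, n ≤ i → μ i = 0) (k : ℕ) :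
    conj N μ k ≤ n := by
  rw [conj]
  calc ((Finset.range N).filter (fun i => k < μ i)).card
      ≤ (Finset.range n).card := by
        refine Finset.card_le_card ?_
        intro i hi
        rw [Finset.mem_filter] at hi
        rw [Finset.mem_range]
        by_contra hc
        have := hrows i (by omega)
        omega
  _ = n := Finset.card_range n

lemma conj_chains {n N : ℕ} (hN : N = n + 2) {μ : ℕ → ℕ} (hμ : μ ∈ bx N)
    (hrows : ∀ k, n ≤ k → μ k = 0) (hant : Antit μ)
    {R : Type*} [CommSemiring R] (x : ℕ → R) :
    ∑ c ∈ HC n N n (conj N μ), wt n N x c = ∑ d ∈ VC n N μ, wt n N x d := by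
  have hμv : ∀ i, μ i ≤ N := (mem_bx.mp hμ).1
  have hμr : ∀ i, N ≤ i → μ i = 0 := (mem_bx.mp hμ).2
  refine Finset.sum_nbij' (fun c => fun k => conj N (c k)) (fun d => fun k => conj N (d k))
    ?_ ?_ ?_ ?_ ?_
  · intro c hc
    have helem := hc_elem_antit hc
    simp only [HC, Finset.mem_filter] at hc
    obtain ⟨hcb, h0, hconst, hst⟩ := hc
    obtain ⟨hcbx, hcc⟩ := mem_chbx.mp hcb
    have hv : ∀ k i, c k i ≤ N := fun k i => (mem_bx.mp (hcbx k)).1 i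
    have hriN : ∀ k i, N ≤ i → c k i = 0 := fun k i hi => (mem_bx.mp (hcbx k)).2 i hi
    have hlek : ∀ k i, c k i ≤ conj N μ i := by
      intro k i
      rcases le_or_gt k n with h | h
      · calc c k i ≤ c n i := le_chain h (fun k' _ hk2 j => (hst k' hk2).1 j) i
        _ = conj N μ i := by rw [hconst n le_rfl]
      · rw [hconst k (by omega)]
    have hsmall : ∀ k i, c k i ≤ n := by
      intro k i
      calc c k i ≤ conj N μ i := hlek k i
      _ ≤ n := conj_le_n hrows i
    have hcnice : ∀ k, conj N (c k) (N - 1) = 0 := by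
      intro k
      rw [conj]
      convert Finset.card_empty
      rw [Finset.filter_eq_empty_iff]
      intro i _
      have := hsmall k i
      omega
    refine Finset.mem_filter.mpr ⟨?_, ?_, ?_, ?_, ?_⟩
    · refine mem_chbx.mpr ⟨fun k => ?_, fun k hk => ?_⟩
      · exact mem_bx.mpr ⟨fun i => conj_val_le i, fun i hi => conj_rows (hv k) i hi⟩
      · show conj N (c k) = conj N (c n)
        rw [hcc k hk]
    · show conj N (c 0) = zfn
      rw [h0, conj_zfn]
    · show conj N (c n) = μ
      rw [hconst n le_rfl]
      exact conj_conj hant hμv hμr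
    · intro k hk
      exact conj_HS_VS (helem k) (hriN k) (helem (k+1)) (hriN (k+1)) (hst k hk)
    · intro k
      exact ⟨conj_antit, hcnice k⟩
  · intro d hd
    simp only [VC, Finset.mem_filter] at hd
    obtain ⟨hdb, h0, hend, hst, hnice⟩ := hd
    obtain ⟨hdbx, hdc⟩ := mem_chbx.mp hdb
    have hv : ∀ k i, d k i ≤ N := fun k i => (mem_bx.mp (hdbx k)).1 i
    have hriN : ∀ k i, N ≤ i → d k i = 0 := fun k i hi => (mem_bx.mp (hdbx k)).2 i hi
    refine Finset.mem_filter.mpr ⟨?_, ?_, ?_, ?_⟩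
    · refine mem_chbx.mpr ⟨fun k => ?_, fun k hk => ?_⟩
      · exact mem_bx.mpr ⟨fun i => conj_val_le i, fun i hi => conj_rows (hv k) i hi⟩
      · show conj N (d k) = conj N (d n)
        rw [hdc k hk]
    · show conj N (d 0) = zfn
      rw [h0, conj_zfn]
    · intro k hk
      show conj N (d k) = conj N μ
      rcases Nat.eq_or_lt_of_le hk with h | h
      · rw [← h, hend]
      · rw [hdc k (by omega), hend]
    · intro k hk
      exact conj_VS_HS (hnice k).1 (hriN k) (hnice (k+1)).1 (hriN (k+1)) (hst k hk)
  · intro c hc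
    have helem := hc_elem_antit hc
    simp only [HC, Finset.mem_filter] at hc
    obtain ⟨hcb, h0, hconst, hst⟩ := hc
    obtain ⟨hcbx, hcc⟩ := mem_chbx.mp hcb
    funext k
    exact conj_conj (helem k) (fun i => (mem_bx.mp (hcbx k)).1 i)
      (fun i hi => (mem_bx.mp (hcbx k)).2 i hi)
  · intro d hd
    simp only [VC, Finset.mem_filter] at hd
    obtain ⟨hdb, h0, hend, hst, hnice⟩ := hd
    obtain ⟨hdbx, hdc⟩ := mem_chbx.mp hdb
    funext k
    exact conj_conj (hnice k).1 (fun i => (mem_bx.mp (hdbx k)).1 i)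
      (fun i hi => (mem_bx.mp (hdbx k)).2 i hi)
  · intro c hc
    simp only [HC, Finset.mem_filter] at hc
    obtain ⟨hcb, h0, hconst, hst⟩ := hc
    obtain ⟨hcbx, hcc⟩ := mem_chbx.mp hcb
    rw [wt, wt]
    refine Finset.prod_congr rfl (fun k _ => ?_)
    rw [sz_conj (fun i => (mem_bx.mp (hcbx k)).1 i),
      sz_conj (fun i => (mem_bx.mp (hcbx (k+1))).1 i)]

/-! ### Final assembly -/

lemma rename_wt {n N : ℕ} (σ : Fin n → Fin n ⊕ Fin n) (c : ℕ → ℕ → ℕ) :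
    MvPolynomial.rename σ (wt n N (xvar n) c)
      = wt n N (fun k => MvPolynomial.rename σ (xvar n k)) c := by
  rw [wt, wt, map_prod]
  exact Finset.prod_congr rfl (fun k _ => by rw [map_pow])

lemma vc_vals {n N : ℕ} {M : ℕ → ℕ} {d : ℕ → ℕ → ℕ} (hd : d ∈ VC n N M) :
    ∀ i, M i ≤ n := by
  simp only [VC, Finset.mem_filter] at hd
  obtain ⟨hdb, h0, hend, hst, hn⟩ := hd
  intro i
  rw [← hend]
  exact vchain_val_le h0 (fun k hk => hst k hk) n le_rfl i

lemma extf_lt {n : ℕ} (μ : Fin n → ℕ) (i : Fin n) : extf μ (i : ℕ) = μ i := by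
  rw [extf, dif_pos i.isLt]

lemma extf_conjPart {n N : ℕ} (hN : N = n + 2) (μ : Fin n → ℕ) (hval : ∀ i, μ i ≤ n) :
    extf (fun j : Fin n => conjPart μ (j : ℕ)) = conj N (extf μ) := by
  funext k
  by_cases hk : k < n
  · rw [extf, dif_pos hk]
    show conjPart μ k = conj N (extf μ) k
    rw [conjPart, conj]
    have himg : (Finset.range N).filter (fun i => k < extf μ i)
        = (Finset.univ.filter (fun i : Fin n => k < μ i)).image Fin.val := by
      ext i
      simp only [Finset.mem_filter, Finset.mem_range, Finset.mem_image, Finset.mem_univ,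
        true_and]
      constructor
      · rintro ⟨hi1, hi2⟩
        rw [extf] at hi2
        by_cases h : i < n
        · rw [dif_pos h] at hi2
          exact ⟨⟨i, h⟩, hi2, rfl⟩
        · rw [dif_neg h] at hi2
          omega
      · rintro ⟨i', hi', rfl⟩
        refine ⟨by omega, ?_⟩
        rw [extf, dif_pos i'.isLt]
        simpa using hi'
    rw [himg, Finset.card_image_of_injective _ Fin.val_injective]
  · rw [extf, dif_neg hk]
    have : (Finset.range N).filter (fun i => k < extf μ i) = ∅ := by
      rw [Finset.filter_eq_empty_iff]
      intro i _
      rw [extf]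
      split
      next h => have := hval ⟨_, h⟩; omega
      next h => omega
    rw [conj, this, Finset.card_empty]

lemma extf_bx {n N : ℕ} (hN : N = n + 2) (μ : Fin n → ℕ) (hval : ∀ i, μ i ≤ n) :
    extf μ ∈ bx N := by
  refine mem_bx.mpr ⟨fun k => ?_, fun k hk => ?_⟩
  · rw [extf]
    split
    next h => have := hval ⟨_, h⟩; omega
    next h => omega
  · rw [extf, dif_neg (by omega)]

lemma extf_rows {n : ℕ} (μ : Fin n → ℕ) : ∀ k, n ≤ k → extf μ k = 0 := by
  intro k hk
  rw [extf, dif_neg (by omega)]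

lemma extf_antit {n : ℕ} (μ : Fin n → ℕ) (hant : ∀ i j : Fin n, i ≤ j → μ j ≤ μ i) :
    Antit (extf μ) := by
  intro i j hij
  rw [extf, extf]
  by_cases hj : j < n
  · have hi : i < n := by omega
    rw [dif_pos hi, dif_pos hj]
    exact hant ⟨i, hi⟩ ⟨j, hj⟩ (by simp only [Fin.mk_le_mk]; exact hij)
  · rw [dif_neg hj]
    omega

lemma conjPart_antit {n : ℕ} (μ : Fin n → ℕ) :
    ∀ i j : Fin n, i ≤ j → conjPart μ (j : ℕ) ≤ conjPart μ (i : ℕ) := by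
  intro i j hij
  rw [conjPart, conjPart]
  refine Finset.card_le_card (Finset.monotone_filter_right _ ?_)
  intro a ha
  have : (i : ℕ) ≤ (j : ℕ) := hij
  omega

lemma conjPart_le {n : ℕ} (μ : Fin n → ℕ) (j : ℕ) : conjPart μ j ≤ n := by
  rw [conjPart]
  calc _ ≤ (Finset.univ : Finset (Fin n)).card := Finset.card_le_card (Finset.filter_subset _ _)
  _ = n := by simp

lemma prod_convert (n : ℕ) :
    (∏ p : Fin n × Fin n,
        (1 + MvPolynomial.X (Sum.inl p.1) * MvPolynomial.X (Sum.inr p.2) :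
          MvPolynomial (Fin n ⊕ Fin n) ℤ))
    = ∏ j ∈ Finset.range n, ∏ i ∈ Finset.range n,
        (1 + (MvPolynomial.rename Sum.inl (xvar n i)) * (MvPolynomial.rename Sum.inr (xvar n j))) := by
  rw [Fintype.prod_prod_type, Finset.prod_comm]
  rw [← Fin.prod_univ_eq_prod_range (fun j => ∏ i ∈ Finset.range n,
    (1 + (MvPolynomial.rename Sum.inl (xvar n i)) * (MvPolynomial.rename Sum.inr (xvar n j)))) n]
  refine Finset.prod_congr rfl (fun j _ => ?_)
  rw [← Fin.prod_univ_eq_prod_range (fun i =>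
    (1 + (MvPolynomial.rename Sum.inl (xvar n i)) * (MvPolynomial.rename Sum.inr (xvar n (j : ℕ))))) n]
  refine Finset.prod_congr rfl (fun i _ => ?_)
  have e1 : MvPolynomial.rename (Sum.inl : Fin n → Fin n ⊕ Fin n) (xvar n (i : ℕ))
      = MvPolynomial.X (Sum.inl i) := by
    simp only [xvar]
    rw [dif_pos i.isLt, MvPolynomial.rename_X]
  have e2 : MvPolynomial.rename (Sum.inr : Fin n → Fin n ⊕ Fin n) (xvar n (j : ℕ))
      = MvPolynomial.X (Sum.inr j) := by
    simp only [xvar]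
    rw [dif_pos j.isLt, MvPolynomial.rename_X]
  rw [e1, e2]

end DC

/-- The dual Cauchy identity:
`∏_{i,j=1}^n (1 + α_i β_j) = Σ_μ s_{μ'}(α_1,…,α_n) s_μ(β_1,…,β_n)`,
where the sum is over all partitions `μ` fitting in an `n × n` box and `μ'` is the
conjugate partition.  `Sum.inl` indexes the `α` variables, `Sum.inr` the `β` variables. -/
theorem dual_cauchy_identity (n : ℕ) :
    (∏ p : Fin n × Fin n,
        (1 + MvPolynomial.X (Sum.inl p.1) * MvPolynomial.X (Sum.inr p.2) :
          MvPolynomial (Fin n ⊕ Fin n) ℤ)) =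
    ∑ μ ∈ (Fintype.piFinset fun _ : Fin n => Finset.range (n + 1)).filter
        (fun f => ∀ i j : Fin n, i ≤ j → f j ≤ f i),
      (MvPolynomial.rename Sum.inl (schurPoly (fun j : Fin n => conjPart μ (j : ℕ)) n)) *
        (MvPolynomial.rename Sum.inr (schurPoly μ n)) := by
  have hNN : (n + 2 : ℕ) = n + 2 := rfl
  set xl := fun k => MvPolynomial.rename (Sum.inl : Fin n → Fin n ⊕ Fin n) (DC.xvar n k) with hxl
  set yr := fun k => MvPolynomial.rename (Sum.inr : Fin n → Fin n ⊕ Fin n) (DC.xvar n k) with hyr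
  rw [DC.prod_convert n]
  rw [DC.growth (N := n + 2) rfl xl yr n le_rfl]
  set S := (Fintype.piFinset fun _ : Fin n => Finset.range (n + 1)).filter
      (fun f => ∀ i j : Fin n, i ≤ j → f j ≤ f i) with hS
  have hmemS : ∀ μ ∈ S, (∀ i, μ i ≤ n) ∧ (∀ i j : Fin n, i ≤ j → μ j ≤ μ i) := by
    intro μ hμ
    rw [hS, Finset.mem_filter] at hμ
    refine ⟨fun i => ?_, hμ.2⟩
    have := Fintype.mem_piFinset.mp hμ.1 i
    rw [Finset.mem_range] at this
    omega
  have hsub : S.image DC.extf ⊆ DC.bx (n + 2) := by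
    intro M hM
    rw [Finset.mem_image] at hM
    obtain ⟨μ, hμ, rfl⟩ := hM
    exact DC.extf_bx rfl μ (hmemS μ hμ).1
  have hzero : ∀ M ∈ DC.bx (n + 2), M ∉ S.image DC.extf →
      (∑ d ∈ DC.VC n (n+2) M, DC.wt n (n+2) xl d)
        * (∑ c ∈ DC.HC n (n+2) n M, DC.wt n (n+2) yr c) = 0 := by
    intro M hM hnm
    by_cases h1 : (DC.HC n (n+2) n M).Nonempty
    · by_cases h2 : (DC.VC n (n+2) M).Nonempty
      · exfalso
        obtain ⟨c, hc⟩ := h1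
        obtain ⟨d, hd⟩ := h2
        obtain ⟨hbx, hant, hrows, hnice⟩ := DC.hc_props le_rfl rfl hc
        have hvals := DC.vc_vals hd
        refine hnm (Finset.mem_image.mpr ⟨fun i => M (i : ℕ), ?_, ?_⟩)
        · rw [hS, Finset.mem_filter]
          refine ⟨Fintype.mem_piFinset.mpr (fun i => Finset.mem_range.mpr ?_), ?_⟩
          · have := hvals (i : ℕ)
            omega
          · intro i j hij
            exact hant (i : ℕ) (j : ℕ) hij
        · funext k
          rw [DC.extf]
          by_cases hk : k < n
          · rw [dif_pos hk]
          · rw [dif_neg hk]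
            exact (hrows k (by omega)).symm
      · rw [Finset.not_nonempty_iff_eq_empty.mp h2, Finset.sum_empty, zero_mul]
    · rw [Finset.not_nonempty_iff_eq_empty.mp h1, Finset.sum_empty, mul_zero]
  rw [← Finset.sum_subset hsub hzero]
  rw [Finset.sum_image (fun μ hμ μ' hμ' he => by
    funext i
    have := congrFun he (i : ℕ)
    rwa [DC.extf_lt, DC.extf_lt] at this)]
  refine Finset.sum_congr rfl (fun μ hμ => ?_)
  obtain ⟨hval, hant⟩ := hmemS μ hμ
  have hR : MvPolynomial.rename (Sum.inr : Fin n → Fin n ⊕ Fin n) (schurPoly μ n)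
      = ∑ c ∈ DC.HC n (n+2) n (DC.extf μ), DC.wt n (n+2) yr c := by
    rw [DC.schur_eq_chains (N := n+2) rfl μ hant hval, map_sum]
    exact Finset.sum_congr rfl (fun c _ => DC.rename_wt _ c)
  have hL : MvPolynomial.rename (Sum.inl : Fin n → Fin n ⊕ Fin n)
        (schurPoly (fun j : Fin n => conjPart μ (j : ℕ)) n)
      = ∑ d ∈ DC.VC n (n+2) (DC.extf μ), DC.wt n (n+2) xl d := by
    rw [DC.schur_eq_chains (N := n+2) rfl (fun j : Fin n => conjPart μ (j : ℕ))
      (DC.conjPart_antit μ) (fun j => DC.conjPart_le μ _), map_sum]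
    rw [Finset.sum_congr rfl (fun c _ => DC.rename_wt _ c)]
    rw [Finset.sum_congr (by rw [DC.extf_conjPart (N := n+2) rfl μ hval]) (fun c _ => rfl)]
    exact DC.conj_chains rfl (DC.extf_bx rfl μ hval) (DC.extf_rows μ) (DC.extf_antit μ hant) xl
  rw [hR, hL]


end
end

section
/- The generating function for plane partitions in the box B(a,b,c) can be written as a principal specialization of a Schur function: Σ_P q^{|P|} = q^{-b·a(a+1)/2} · s_{b^a}(q^{a+c}, q^{a+c-1}, ..., q), where b^a is the rectangular partition with a parts each equal to b. -/
open scoped Classical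

noncomputable section

/-! Reading the Schur polynomial of the rectangle `b^a` as a sum over column-strict tableaux
`T : Fin a → Fin b → Fin (a + c)`, the substitution `x_l ↦ q^(a+c-l)` gives `T` the weight
`q^(∑ (a + c - T i j))`. These tableaux correspond bijectively to the plane partitions in
`B(a,b,c)` via `T i j = i + (c - π i j)`: subtracting the row index turns strictly increasing
columns into weakly increasing ones, and column strictness forces `i ≤ T i j ≤ i + c`, which is
exactly `0 ≤ π i j ≤ c`. Under this bijection `a + c - T i j = (a - i) + π i j`, and these sum
to `b·a(a+1)/2 + |π|`. -/

open Finset MvPolynomial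

lemma Fin.sum_univ_sub_val (a : ℕ) : ∑ i : Fin a, (a - (i : ℕ)) = a * (a + 1) / 2 := by
  rw [Fin.sum_univ_eq_sum_range (fun i => a - i), ← sum_range_reflect]
  rw [sum_congr rfl fun i hi => show a - (a - 1 - i) = i + 1 by simp at hi; omega]
  have := sum_range_succ' (fun i => i) a
  rw [add_zero] at this
  rw [← this, sum_range_id, Nat.add_sub_cancel, mul_comm]

lemma StrictMono.add_sub_le {a : ℕ} {g : Fin a → ℕ} (hg : StrictMono g) {i j : Fin a}
    (hij : i ≤ j) : g i + (j - i : ℕ) ≤ g j := by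
  obtain ⟨j, hj⟩ := j
  induction j with
  | zero =>
    obtain rfl : i = ⟨0, hj⟩ := le_antisymm hij (Fin.mk_le_mk.2 (Nat.zero_le _))
    simp
  | succ k ih =>
    rcases eq_or_lt_of_le hij with rfl | hlt
    · simp
    · have hik : i ≤ ⟨k, by omega⟩ := Fin.le_def.2 (by simpa [Fin.lt_def] using hlt)
      have h₁ := ih (by omega) hik
      have h₂ := hg (show (⟨k, by omega⟩ : Fin a) < ⟨k + 1, hj⟩ from
        Fin.mk_lt_mk.2 k.lt_succ_self)
      simp only [Fin.le_def] at hik h₁ ⊢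
      omega

lemma StrictMono.val_apply_mem_Icc {a n : ℕ} {g : Fin a → Fin (a + n)}
    (hg : StrictMono g) (i : Fin a) : (g i : ℕ) ∈ Set.Icc (i : ℕ) (i + n) := by
  have hv : StrictMono fun k => (g k : ℕ) := Fin.val_strictMono.comp hg
  have := i.isLt
  have hfirst := hv.add_sub_le (Fin.le_def.2 (Nat.zero_le i) : (⟨0, by omega⟩ : Fin a) ≤ i)
  have hlast := hv.add_sub_le
    (Fin.le_def.2 (show (i : ℕ) ≤ a - 1 by omega) : i ≤ ⟨a - 1, by omega⟩)
  have := (g ⟨a - 1, by omega⟩).isLt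
  simp only at hfirst hlast
  exact ⟨by omega, by omega⟩

def IsColumnStrict {a b n : ℕ} (T : Fin a → Fin b → Fin n) : Prop :=
  (∀ i, Monotone (T i)) ∧ ∀ j, StrictMono fun i => T i j

section RectangularShape

variable {a b : ℕ}

lemma mem_pcells_const_iff (p : Fin a × ℕ) : p ∈ pcells (fun _ : Fin a => b) ↔ p.2 < b := by
  simp only [pcells, mem_filter, mem_product, mem_univ, true_and, mem_range, and_iff_right_iff_imp]
  exact fun h => h.trans_le (le_sup (f := fun _ : Fin a => b) (mem_univ p.1))

variable (a b) in
def rectCellEquiv : {x // x ∈ pcells (fun _ : Fin a => b)} ≃ Fin a × Fin b where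
  toFun p := (p.1.1, ⟨p.1.2, (mem_pcells_const_iff _).1 p.2⟩)
  invFun q := ⟨(q.1, q.2), (mem_pcells_const_iff _).2 q.2.isLt⟩
  left_inv _ := rfl
  right_inv _ := rfl

lemma isSSYT_const_iff {n : ℕ} (T : {x // x ∈ pcells (fun _ : Fin a => b)} → Fin n) :
    IsSSYT (fun _ : Fin a => b) T ↔
      IsColumnStrict fun i j => T ((rectCellEquiv a b).symm (i, j)) := by
  constructor
  · rintro ⟨hrow, hcol⟩
    exact ⟨fun i j j' h => hrow _ _ rfl h, fun j i i' h => hcol _ _ rfl h⟩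
  · rintro ⟨hrow, hcol⟩
    constructor
    · rintro ⟨⟨i, j⟩, hp⟩ ⟨⟨i', j'⟩, hq⟩ (rfl : i = i') (h : j ≤ j')
      exact hrow i (a := ⟨j, (mem_pcells_const_iff _).1 hp⟩)
        (b := ⟨j', (mem_pcells_const_iff _).1 hq⟩) h
    · rintro ⟨⟨i, j⟩, hp⟩ ⟨⟨i', j'⟩, hq⟩ (rfl : j = j') (h : i < i')
      exact hcol ⟨j, (mem_pcells_const_iff _).1 hp⟩ h

lemma schurPoly_const (n : ℕ) :
    schurPoly (fun _ : Fin a => b) n =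
      ∑ T : {T : Fin a → Fin b → Fin n // IsColumnStrict T}, ∏ i, ∏ j, X (T.1 i j) := by
  let e := ((rectCellEquiv a b).arrowCongr (Equiv.refl (Fin n))).trans (Equiv.curry _ _ _)
  rw [schurPoly, sum_subtype _ (fun T => by rw [mem_filter, and_iff_right (mem_univ T)])]
  refine Fintype.sum_equiv (e.subtypeEquiv isSSYT_const_iff) _ _ fun T => ?_
  rw [← Fintype.prod_prod_type', ← Fintype.prod_equiv (rectCellEquiv a b) _ _ fun _ => rfl]
  rfl

end RectangularShape

section EntryCorrespondence

variable {a c : ℕ}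

def tableauEntry (i : Fin a) (x : Fin (c + 1)) : Fin (a + c) :=
  ⟨i + (c - x), by omega⟩

/-- Inverse of `tableauEntry i` on `i ≤ y ≤ i + c`; the truncated subtractions make it total. -/
def planePartitionEntry (i : Fin a) (y : Fin (a + c)) : Fin (c + 1) :=
  ⟨c - (y - i), by omega⟩

lemma tableauEntry_le_tableauEntry_iff (i : Fin a) {x x' : Fin (c + 1)} :
    tableauEntry i x ≤ tableauEntry i x' ↔ x' ≤ x := by
  simp only [tableauEntry, Fin.le_def]
  omega

lemma planePartitionEntry_tableauEntry (i : Fin a) (x : Fin (c + 1)) :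
    planePartitionEntry i (tableauEntry i x) = x := by
  ext
  simp only [planePartitionEntry, tableauEntry]
  omega

lemma tableauEntry_planePartitionEntry {i : Fin a} {y : Fin (a + c)}
    (h : (y : ℕ) ∈ Set.Icc (i : ℕ) (i + c)) :
    tableauEntry i (planePartitionEntry i y) = y := by
  obtain ⟨h₁, h₂⟩ := h
  ext
  simp only [planePartitionEntry, tableauEntry]
  omega

lemma add_sub_tableauEntry (i : Fin a) (x : Fin (c + 1)) :
    a + c - (tableauEntry i x : ℕ) = (a - i) + x := by
  simp only [tableauEntry]
  omega

end EntryCorrespondence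

def planePartitionEquivTableau (a b c : ℕ) :
    {π : Fin a → Fin b → Fin (c + 1) //
        (∀ i i' j, i ≤ i' → (π i' j : ℕ) ≤ π i j) ∧
          ∀ i j j', j ≤ j' → (π i j' : ℕ) ≤ π i j} ≃
      {T : Fin a → Fin b → Fin (a + c) // IsColumnStrict T} where
  toFun π := ⟨fun i j => tableauEntry i (π.1 i j),
    fun i j j' h => (tableauEntry_le_tableauEntry_iff i).2 (π.2.2 i j j' h),
    fun j i i' h => by
      have := π.2.1 i i' j h.le
      simp only [tableauEntry, Fin.lt_def] at h ⊢
      omega⟩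
  invFun T := ⟨fun i j => planePartitionEntry i (T.1 i j),
    fun i i' j h => by
      have hv : StrictMono fun k => (T.1 k j : ℕ) := Fin.val_strictMono.comp (T.2.2 j)
      have := hv.add_sub_le h
      simp only [planePartitionEntry, Fin.le_def] at h ⊢
      omega,
    fun i j j' h => by
      have := Fin.le_def.1 (T.2.1 i h)
      simp only [planePartitionEntry]
      omega⟩
  left_inv π := Subtype.ext <| funext₂ fun i j => planePartitionEntry_tableauEntry i (π.1 i j)
  right_inv T := Subtype.ext <| funext₂ fun i j =>
    tableauEntry_planePartitionEntry ((T.2.2 j).val_apply_mem_Icc i)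

lemma sum_sub_tableauEntry (a b c : ℕ) (π : Fin a → Fin b → Fin (c + 1)) :
    ∑ i, ∑ j, (a + c - (tableauEntry i (π i j) : ℕ)) =
      b * (a * (a + 1) / 2) + ∑ i, ∑ j, (π i j : ℕ) := by
  simp only [add_sub_tableauEntry, sum_add_distrib, sum_const, card_univ, Fintype.card_fin,
    smul_eq_mul, ← mul_sum, Fin.sum_univ_sub_val]

/-- The generating function for plane partitions in the box `B(a,b,c)` is a principal
specialization of a Schur function:
`Σ_P q^{|P|} = q^{-b·a(a+1)/2} · s_{b^a}(q^{a+c}, q^{a+c-1}, …, q)`,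
where `b^a` is the rectangular partition with `a` parts all equal to `b`, and the Schur
polynomial is in `a + c` variables.  The negative power of `q` is cleared by
multiplying both sides by `q^{b·a(a+1)/2}`. -/
theorem macmahon_schur_specialization (a b c : ℕ) :
    (Polynomial.X : Polynomial ℤ) ^ (b * (a * (a + 1) / 2)) *
      (∑ π : {π : Fin a → Fin b → Fin (c + 1) //
          (∀ i i' j, i ≤ i' → (π i' j : ℕ) ≤ π i j) ∧
          ∀ i j j', j ≤ j' → (π i j' : ℕ) ≤ π i j},
        (Polynomial.X : Polynomial ℤ) ^ (∑ i, ∑ j, (π.val i j : ℕ))) =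
    MvPolynomial.eval₂ (Polynomial.C : ℤ →+* Polynomial ℤ)
      (fun l : Fin (a + c) => (Polynomial.X : Polynomial ℤ) ^ (a + c - (l : ℕ)))
      (schurPoly (fun _ : Fin a => b) (a + c)) := by
  rw [schurPoly_const, eval₂_sum, mul_sum]
  refine Fintype.sum_equiv (planePartitionEquivTableau a b c) _ _ fun π => ?_
  simp only [eval₂_prod, eval₂_X, prod_pow_eq_pow_sum, ← pow_add]
  exact congrArg _ (sum_sub_tableauEntry a b c π.1).symm

end
end
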